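/- arXiv:2007.12930 — 5 statements merged into one kernel-verified Lean document; each statement's English description precedes it below -/
import Mathlib

section
/- Let T be a tree containing a vertex v of degree 2 with neighbors u and w, where deg(w) = 3 and w has further neighbors w₁ and w₂ different from v. Let T′ = T − {ww₁, ww₂} + {vw₁, vw₂}. Then W_p(T) − W_p(T′) = 2 − (deg(w₁) − 1) − (deg(w₂) − 1) − 2(deg(u) − 1), where all degrees are taken in T. -/
open SimpleGraph Finset

noncomputable def deg {V : Type*} [Fintype V] (G : SimpleGraph V) (v : V) : ℕ := by
  classical exact G.degree v

noncomputable def Wp {V : Type*} [Fintype V] (G : SimpleGraph V) : ℤ := by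
  classical
  exact ∑ e ∈ G.edgeFinset,
    Sym2.lift ⟨fun u v => ((deg G u : ℤ) - 1) * ((deg G v : ℤ) - 1),
      fun u v => by ring⟩ e

lemma deg_eq {V : Type*} [Fintype V] (G : SimpleGraph V) [DecidableRel G.Adj] (x : V) :
    deg G x = G.degree x := by
  unfold deg; congr!

lemma Wp_eq {V : Type*} [Fintype V] (G : SimpleGraph V) [Fintype G.edgeSet] :
    Wp G = ∑ e ∈ G.edgeFinset,
      Sym2.lift ⟨fun u v => ((deg G u : ℤ) - 1) * ((deg G v : ℤ) - 1),
        fun u v => by ring⟩ e := by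
  unfold Wp; congr!

lemma tree_no_two_step {V : Type*} (T : SimpleGraph V) (hT : T.IsTree)
    {v w x : V} (hvw : T.Adj v w) (hwx : T.Adj w x) (hxv : x ≠ v) :
    ¬ T.Adj v x := by
  intro hvx
  obtain ⟨p, -, hp⟩ := hT.existsUnique_path v x
  have h1 : (SimpleGraph.Walk.cons hvx SimpleGraph.Walk.nil).IsPath := by
    simp [SimpleGraph.Walk.isPath_def, hvx.ne]
  have h2 : (SimpleGraph.Walk.cons hvw (SimpleGraph.Walk.cons hwx SimpleGraph.Walk.nil)).IsPath := by
    simp [SimpleGraph.Walk.isPath_def, hvw.ne, hxv.symm, hwx.ne]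
  have e1 := hp _ h1
  have e2 := hp _ h2
  have heq := e1.trans e2.symm
  simpa using congrArg SimpleGraph.Walk.length heq

theorem wp_deg2_swap {V : Type*} [Fintype V] (T T' : SimpleGraph V)
    (hT : T.IsTree) (hT' : T'.IsTree)
    (u v w w₁ w₂ : V)
    (hdv : deg T v = 2) (hvu : T.Adj v u) (hvw : T.Adj v w) (huw : u ≠ w)
    (hdw : deg T w = 3) (hww₁ : T.Adj w w₁) (hww₂ : T.Adj w w₂)
    (hw₁v : w₁ ≠ v) (hw₂v : w₂ ≠ v) (hw₁w₂ : w₁ ≠ w₂)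
    (hE : T'.edgeSet = (T.edgeSet \ {s(w, w₁), s(w, w₂)}) ∪ {s(v, w₁), s(v, w₂)}) :
    Wp T - Wp T' =
      2 - ((deg T w₁ : ℤ) - 1) - ((deg T w₂ : ℤ) - 1) - 2 * ((deg T u : ℤ) - 1) := by
  classical
  -- distinctness
  have hvu' : v ≠ u := hvu.ne
  have hvw' : v ≠ w := hvw.ne
  have hww₁' : w ≠ w₁ := hww₁.ne
  have hww₂' : w ≠ w₂ := hww₂.ne
  have hnvw₁ : ¬ T.Adj v w₁ := tree_no_two_step T hT hvw hww₁ hw₁v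
  have hnvw₂ : ¬ T.Adj v w₂ := tree_no_two_step T hT hvw hww₂ hw₂v
  have huw₁ : u ≠ w₁ := fun h => hnvw₁ (h ▸ hvu)
  have huw₂ : u ≠ w₂ := fun h => hnvw₂ (h ▸ hvu)
  have huv : u ≠ v := hvu'.symm
  have hwv : w ≠ v := hvw'.symm
  have hwu : w ≠ u := huw.symm
  have hw₁w : w₁ ≠ w := hww₁'.symm
  have hw₂w : w₂ ≠ w := hww₂'.symm
  have hw₁u : w₁ ≠ u := huw₁.symm
  have hw₂u : w₂ ≠ u := huw₂.symm
  have hvw₁' : v ≠ w₁ := hw₁v.symm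
  have hvw₂' : v ≠ w₂ := hw₂v.symm
  have hw₂w₁ : w₂ ≠ w₁ := hw₁w₂.symm
  -- degrees as neighborFinset cards
  rw [deg_eq] at hdv hdw
  -- neighborFinset of v and w in T
  have hNv : T.neighborFinset v = {u, w} := by
    refine (Finset.eq_of_subset_of_card_le ?_ ?_).symm
    · intro x hx
      simp only [Finset.mem_insert, Finset.mem_singleton] at hx
      rcases hx with rfl | rfl <;> simp [SimpleGraph.mem_neighborFinset, hvu, hvw]
    · rw [← SimpleGraph.degree, hdv, Finset.card_insert_of_notMem (by simp [huw]),
        Finset.card_singleton]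
  have hNw : T.neighborFinset w = {v, w₁, w₂} := by
    refine (Finset.eq_of_subset_of_card_le ?_ ?_).symm
    · intro x hx
      simp only [Finset.mem_insert, Finset.mem_singleton] at hx
      rcases hx with rfl | rfl | rfl <;>
        simp [SimpleGraph.mem_neighborFinset, hvw.symm, hww₁, hww₂]
    · rw [← SimpleGraph.degree, hdw,
        Finset.card_insert_of_notMem (by simp [hvw₁', hvw₂']),
        Finset.card_insert_of_notMem (by simp [hw₁w₂]), Finset.card_singleton]
  have hAdjvT : ∀ y, T.Adj v y ↔ (y = u ∨ y = w) := by
    intro y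
    rw [← SimpleGraph.mem_neighborFinset, hNv]; simp
  have hAdjwT : ∀ y, T.Adj w y ↔ (y = v ∨ y = w₁ ∨ y = w₂) := by
    intro y
    rw [← SimpleGraph.mem_neighborFinset, hNw]; simp
    -- adjacency in T'
  have hAdj : ∀ x y : V, T'.Adj x y ↔
      (T.Adj x y ∧ s(x,y) ≠ s(w,w₁) ∧ s(x,y) ≠ s(w,w₂)) ∨ s(x,y) = s(v,w₁) ∨ s(x,y) = s(v,w₂) := by
    intro x y
    rw [← SimpleGraph.mem_edgeSet, hE]
    simp only [Set.mem_union, Set.mem_diff, Set.mem_insert_iff, Set.mem_singleton_iff,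
      SimpleGraph.mem_edgeSet, not_or, ne_eq]
    all_goals aesop
  -- degrees in T'
  have hd'v : T'.degree v = 4 := by
    have hN : T'.neighborFinset v = {u, w, w₁, w₂} := by
      ext y
      simp only [SimpleGraph.mem_neighborFinset, hAdj, ne_eq, Sym2.eq_iff, hAdjvT,
        Finset.mem_insert, Finset.mem_singleton,
        hvu', hvw', hww₁', hww₂', huw, huw₁, huw₂, huv, hwv, hwu, hw₁w, hw₂w, hw₁u, hw₂u,
        hw₁v, hw₂v, hw₁w₂, hvw₁', hvw₂', hw₂w₁,
        false_and, and_false, false_or, or_false, not_false_iff, true_and, and_true, not_or]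
      all_goals aesop
    rw [SimpleGraph.degree, hN,
      Finset.card_insert_of_notMem (by simp [huw, huw₁, huw₂]),
      Finset.card_insert_of_notMem (by simp [hww₁', hww₂']),
      Finset.card_insert_of_notMem (by simp [hw₁w₂]), Finset.card_singleton]
  have hd'w : T'.degree w = 1 := by
    have hN : T'.neighborFinset w = {v} := by
      ext y
      simp only [SimpleGraph.mem_neighborFinset, hAdj, ne_eq, Sym2.eq_iff, hAdjwT,
        Finset.mem_singleton,
        hvu', hvw', hww₁', hww₂', huw, huw₁, huw₂, huv, hwv, hwu, hw₁w, hw₂w, hw₁u, hw₂u,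
        hw₁v, hw₂v, hw₁w₂, hvw₁', hvw₂', hw₂w₁,
        false_and, and_false, false_or, or_false, not_false_iff, true_and, and_true, not_or]
      all_goals aesop
    rw [SimpleGraph.degree, hN, Finset.card_singleton]
  have hdsame : ∀ x : V, x ≠ v → x ≠ w → T'.degree x = T.degree x := by
    intro x hxv hxw
    by_cases hx1 : x = w₁
    · subst hx1
      have hN : T'.neighborFinset x = insert v ((T.neighborFinset x).erase w) := by
        ext y
        simp only [SimpleGraph.mem_neighborFinset, hAdj, ne_eq, Sym2.eq_iff,
          Finset.mem_insert, Finset.mem_erase,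
          hvu', hvw', hww₁', hww₂', huw, huw₁, huw₂, huv, hwv, hwu, hw₁w, hw₂w, hw₁u, hw₂u,
          hw₁v, hw₂v, hw₁w₂, hvw₁', hvw₂', hw₂w₁,
          false_and, and_false, false_or, or_false, not_false_iff, true_and, and_true, not_or]
        all_goals aesop
      rw [SimpleGraph.degree, hN,
        Finset.card_insert_of_notMem (by
          simp only [Finset.mem_erase, SimpleGraph.mem_neighborFinset]
          rintro ⟨-, h⟩; exact hnvw₁ h.symm),
        Finset.card_erase_of_mem (by simp [SimpleGraph.mem_neighborFinset, hww₁.symm]),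
        SimpleGraph.degree]
      have : 0 < (T.neighborFinset x).card :=
        Finset.card_pos.2 ⟨w, by simp [SimpleGraph.mem_neighborFinset, hww₁.symm]⟩
      omega
    · by_cases hx2 : x = w₂
      · subst hx2
        have hN : T'.neighborFinset x = insert v ((T.neighborFinset x).erase w) := by
          ext y
          simp only [SimpleGraph.mem_neighborFinset, hAdj, ne_eq, Sym2.eq_iff,
            Finset.mem_insert, Finset.mem_erase,
            hvu', hvw', hww₁', hww₂', huw, huw₁, huw₂, huv, hwv, hwu, hw₁w, hw₂w, hw₁u, hw₂u,
            hw₁v, hw₂v, hw₁w₂, hvw₁', hvw₂', hw₂w₁,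
            false_and, and_false, false_or, or_false, not_false_iff, true_and, and_true, not_or]
          all_goals aesop
        rw [SimpleGraph.degree, hN,
          Finset.card_insert_of_notMem (by
            simp only [Finset.mem_erase, SimpleGraph.mem_neighborFinset]
            rintro ⟨-, h⟩; exact hnvw₂ h.symm),
          Finset.card_erase_of_mem (by simp [SimpleGraph.mem_neighborFinset, hww₂.symm]),
          SimpleGraph.degree]
        have : 0 < (T.neighborFinset x).card :=
          Finset.card_pos.2 ⟨w, by simp [SimpleGraph.mem_neighborFinset, hww₂.symm]⟩
        omega
      · have hN : T'.neighborFinset x = T.neighborFinset x := by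
          ext y
          simp only [SimpleGraph.mem_neighborFinset, hAdj, ne_eq, Sym2.eq_iff,
            hxv, hxw, hx1, hx2,
            false_and, and_false, false_or, or_false, not_false_iff, true_and, and_true, not_or]
          all_goals aesop
        rw [SimpleGraph.degree, hN, SimpleGraph.degree]
  -- edge membership facts
  have hA1 : s(w,w₁) ∈ T.edgeFinset := by simpa [SimpleGraph.mem_edgeFinset] using hww₁
  have hA2 : s(w,w₂) ∈ T.edgeFinset := by simpa [SimpleGraph.mem_edgeFinset] using hww₂
  have hB1 : s(v,w₁) ∉ T.edgeFinset := by simpa [SimpleGraph.mem_edgeFinset] using hnvw₁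
  have hB2 : s(v,w₂) ∉ T.edgeFinset := by simpa [SimpleGraph.mem_edgeFinset] using hnvw₂
  have hA12 : s(w,w₁) ≠ s(w,w₂) := by simp [ne_eq, Sym2.eq_iff, hw₁w₂, hww₂', hww₁']
  have hB12 : s(v,w₁) ≠ s(v,w₂) := by simp [ne_eq, Sym2.eq_iff, hw₁w₂, hvw₂', hvw₁']
  have hC12 : s(v,u) ≠ s(v,w) := by simp [ne_eq, Sym2.eq_iff, huw, hvw', hvu']
  have hsub : ({s(w,w₁), s(w,w₂)} : Finset (Sym2 V)) ⊆ T.edgeFinset := by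
    intro e he
    simp only [Finset.mem_insert, Finset.mem_singleton] at he
    rcases he with rfl | rfl <;> assumption
  have hET' : T'.edgeFinset =
      (T.edgeFinset \ {s(w,w₁), s(w,w₂)}) ∪ {s(v,w₁), s(v,w₂)} := by
    ext e
    simp only [Finset.mem_union, Finset.mem_sdiff, Finset.mem_insert, Finset.mem_singleton,
      SimpleGraph.mem_edgeFinset, hE, Set.mem_union, Set.mem_diff, Set.mem_insert_iff,
      Set.mem_singleton_iff, not_or]
  have hdisj : Disjoint (T.edgeFinset \ {s(w,w₁), s(w,w₂)})
      ({s(v,w₁), s(v,w₂)} : Finset (Sym2 V)) := by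
    rw [Finset.disjoint_right]
    intro e he
    simp only [Finset.mem_insert, Finset.mem_singleton] at he
    simp only [Finset.mem_sdiff, not_and, not_not]
    rcases he with rfl | rfl <;> intro hmem
    · exact absurd hmem hB1
    · exact absurd hmem hB2
  have hCsub : ({s(v,u), s(v,w)} : Finset (Sym2 V)) ⊆
      T.edgeFinset \ {s(w,w₁), s(w,w₂)} := by
    intro e he
    simp only [Finset.mem_insert, Finset.mem_singleton] at he
    rcases he with rfl | rfl <;>
      simp [SimpleGraph.mem_edgeFinset, hvu, hvw, Sym2.eq_iff, hvw', hvw₁', hvw₂',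
        huw, huw₁, huw₂, hww₁', hww₂', hw₁w₂]
  -- degree transfer for deg
  have hdeg'u : deg T' u = deg T u := by
    rw [deg_eq, deg_eq, hdsame u huv huw]
  have hdeg'w₁ : deg T' w₁ = deg T w₁ := by
    rw [deg_eq, deg_eq, hdsame w₁ hw₁v hw₁w]
  have hdeg'w₂ : deg T' w₂ = deg T w₂ := by
    rw [deg_eq, deg_eq, hdsame w₂ hw₂v hw₂w]
  have hdegv : deg T v = 2 := by rw [deg_eq]; exact hdv
  have hdegw : deg T w = 3 := by rw [deg_eq]; exact hdw
  have hdeg'v : deg T' v = 4 := by rw [deg_eq]; exact hd'v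
  have hdeg'w : deg T' w = 1 := by rw [deg_eq]; exact hd'w
  -- decompose sums
  rw [Wp_eq T, Wp_eq T', hET', Finset.sum_union hdisj, ← Finset.sum_sdiff hsub,
    Finset.sum_pair hA12, Finset.sum_pair hB12, ← Finset.sum_sdiff hCsub,
    ← Finset.sum_sdiff hCsub, Finset.sum_pair hC12, Finset.sum_pair hC12]
  have hzero : ∀ G' : SimpleGraph V, (∀ x : V, x ≠ v → x ≠ w → deg G' x = deg T x) →
      ∑ e ∈ (T.edgeFinset \ {s(w,w₁), s(w,w₂)}) \ {s(v,u), s(v,w)},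
        Sym2.lift ⟨fun a b => ((deg G' a : ℤ) - 1) * ((deg G' b : ℤ) - 1),
          fun a b => by ring⟩ e
      = ∑ e ∈ (T.edgeFinset \ {s(w,w₁), s(w,w₂)}) \ {s(v,u), s(v,w)},
        Sym2.lift ⟨fun a b => ((deg T a : ℤ) - 1) * ((deg T b : ℤ) - 1),
          fun a b => by ring⟩ e := by
    intro G' hG'
    apply Finset.sum_congr rfl
    intro e he
    induction e using Sym2.ind with
    | _ x y =>
      simp only [Finset.mem_sdiff, Finset.mem_insert, Finset.mem_singleton,
        SimpleGraph.mem_edgeFinset, SimpleGraph.mem_edgeSet, Sym2.eq_iff] at he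
      obtain ⟨⟨hadj, hna⟩, hnc⟩ := he
      have hna1 := fun h => hna (Or.inl h)
      have hna2 := fun h => hna (Or.inr h)
      have hnc1 := fun h => hnc (Or.inl h)
      have hnc2 := fun h => hnc (Or.inr h)
      have hclaim : ∀ x' y' : V, T.Adj x' y' →
          ¬(x' = w ∧ y' = w₁ ∨ x' = w₁ ∧ y' = w) → ¬(x' = w ∧ y' = w₂ ∨ x' = w₂ ∧ y' = w) →
          ¬(x' = v ∧ y' = u ∨ x' = u ∧ y' = v) → ¬(x' = v ∧ y' = w ∨ x' = w ∧ y' = v) →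
          x' ≠ v ∧ x' ≠ w := by
        intro x' y' hadj' h1 h2 h3 h4
        constructor
        · rintro rfl
          rcases (hAdjvT y').1 hadj' with rfl | rfl
          · exact h3 (Or.inl ⟨rfl, rfl⟩)
          · exact h4 (Or.inl ⟨rfl, rfl⟩)
        · rintro rfl
          rcases (hAdjwT y').1 hadj' with rfl | rfl | rfl
          · exact h4 (Or.inr ⟨rfl, rfl⟩)
          · exact h1 (Or.inl ⟨rfl, rfl⟩)
          · exact h2 (Or.inl ⟨rfl, rfl⟩)
      have hx := hclaim x y hadj hna1 hna2 hnc1 hnc2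
      have hswap : ∀ {a b c d : V}, ¬(a = c ∧ b = d ∨ a = d ∧ b = c) →
          ¬(b = c ∧ a = d ∨ b = d ∧ a = c) := by
        intro a b c d h hh
        exact h (hh.elim (fun p => Or.inr ⟨p.2, p.1⟩) (fun p => Or.inl ⟨p.2, p.1⟩))
      have hy := hclaim y x hadj.symm (hswap hna1) (hswap hna2) (hswap hnc1) (hswap hnc2)
      simp only [Sym2.lift_mk]
      rw [hG' x hx.1 hx.2, hG' y hy.1 hy.2]
  have hz := hzero T' (fun x h1 h2 => by rw [deg_eq, deg_eq, hdsame x h1 h2])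
  rw [hz]
  simp only [Sym2.lift_mk]
  rw [hdegv, hdegw, hdeg'v, hdeg'w, hdeg'u, hdeg'w₁, hdeg'w₂]
  push_cast
  ring
end

section
/- Let T be a tree containing an internal path u₁u₂u₃…u_s of length at least 3 (so u₁ and u_s are branching vertices and all internal vertices have degree 2), and also containing two adjacent branching vertices u and v with 3 ≤ deg(u), deg(v) ≤ 4. Let T′ = T − {u₁u₂, u₂u₃, uv} + {u₁u₃, uu₂, u₂v}. Then W_p(T) − W_p(T′) = deg(u)·deg(v) − 2·deg(u) − 2·deg(v) + 4 > 0, where degrees are taken in T. -/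
set_option maxHeartbeats 1000000 in
theorem wp_internal_path_swap {V : Type*} [Fintype V] (T T' : SimpleGraph V)
    (hT : T.IsTree) (hT' : T'.IsTree)
    (u₁ u₂ u₃ u v : V)
    (h12 : T.Adj u₁ u₂) (h23 : T.Adj u₂ u₃)
    (hd1 : 3 ≤ deg T u₁) (hd2 : deg T u₂ = 2) (hd3 : deg T u₃ = 2)
    (huv : T.Adj u v) (hdu : 3 ≤ deg T u) (hdu' : deg T u ≤ 4)
    (hdv : 3 ≤ deg T v) (hdv' : deg T v ≤ 4)
    (hdisj : ({u, v} : Set V) ∩ {u₁, u₂, u₃} = ∅)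
    (hE : T'.edgeSet =
      (T.edgeSet \ {s(u₁, u₂), s(u₂, u₃), s(u, v)}) ∪ {s(u₁, u₃), s(u, u₂), s(u₂, v)}) :
    Wp T - Wp T' =
      (deg T u : ℤ) * (deg T v : ℤ) - 2 * (deg T u : ℤ) - 2 * (deg T v : ℤ) + 4 ∧
    (0 : ℤ) < (deg T u : ℤ) * (deg T v : ℤ) - 2 * (deg T u : ℤ) - 2 * (deg T v : ℤ) + 4 := by
  classical
  have hdegT : ∀ x, deg T x = T.degree x := fun _ => rfl
  have hdegT' : ∀ x, deg T' x = T'.degree x := fun _ => rfl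
  -- vertex distinctness
  have hne : ∀ x ∈ ({u, v} : Set V), ∀ y ∈ ({u₁, u₂, u₃} : Set V), x ≠ y := by
    intro x hx y hy hxy
    have : x ∈ ({u, v} : Set V) ∩ {u₁, u₂, u₃} := ⟨hx, hxy ▸ hy⟩
    rw [hdisj] at this
    exact this
  have huu1 : u ≠ u₁ := hne u (by simp) u₁ (by simp)
  have huu2 : u ≠ u₂ := hne u (by simp) u₂ (by simp)
  have huu3 : u ≠ u₃ := hne u (by simp) u₃ (by simp)
  have hvu1 : v ≠ u₁ := hne v (by simp) u₁ (by simp)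
  have hvu2 : v ≠ u₂ := hne v (by simp) u₂ (by simp)
  have hvu3 : v ≠ u₃ := hne v (by simp) u₃ (by simp)
  have huv' : u ≠ v := huv.ne
  have h12' : u₁ ≠ u₂ := h12.ne
  have h23' : u₂ ≠ u₃ := h23.ne
  have h13' : u₁ ≠ u₃ := by
    intro h; rw [h, hd3] at hd1; omega
  -- edges
  set e1 : Sym2 V := s(u₁, u₂) with he1
  set e2 : Sym2 V := s(u₂, u₃) with he2
  set e3 : Sym2 V := s(u, v) with he3
  set a1 : Sym2 V := s(u₁, u₃) with ha1
  set a2 : Sym2 V := s(u, u₂) with ha2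
  set a3 : Sym2 V := s(u₂, v) with ha3
  set R : Finset (Sym2 V) := {e1, e2, e3} with hR
  set A : Finset (Sym2 V) := {a1, a2, a3} with hA
  have hne12 : e1 ≠ e2 := by simp only [he1, he2, ne_eq, Sym2.eq_iff]; tauto
  have hne13 : e1 ≠ e3 := by simp only [he1, he3, ne_eq, Sym2.eq_iff]; tauto
  have hne23 : e2 ≠ e3 := by simp only [he2, he3, ne_eq, Sym2.eq_iff]; tauto
  have hna12 : a1 ≠ a2 := by simp only [ha1, ha2, ne_eq, Sym2.eq_iff]; tauto
  have hna13 : a1 ≠ a3 := by simp only [ha1, ha3, ne_eq, Sym2.eq_iff]; tauto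
  have hna23 : a2 ≠ a3 := by simp only [ha2, ha3, ne_eq, Sym2.eq_iff]; tauto
  have hae : ∀ a ∈ A, ∀ e ∈ R, a ≠ e := by
    intro a ha e he
    simp only [hA, hR, Finset.mem_insert, Finset.mem_singleton] at ha he
    rcases ha with rfl | rfl | rfl <;> rcases he with rfl | rfl | rfl <;>
      simp only [ha1, ha2, ha3, he1, he2, he3, ne_eq, Sym2.eq_iff] <;> tauto
  -- Finset version of hE
  have hEfin : T'.edgeFinset = (T.edgeFinset \ R) ∪ A := by
    ext e
    have := Set.ext_iff.mp hE e
    simp only [Set.mem_union, Set.mem_diff, Set.mem_insert_iff, Set.mem_singleton_iff] at this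
    simp only [SimpleGraph.mem_edgeFinset, this, hR, hA, Finset.mem_union, Finset.mem_sdiff,
      Finset.mem_insert, Finset.mem_singleton, SimpleGraph.mem_edgeFinset]
    try tauto
  have hRsub : R ⊆ T.edgeFinset := by
    intro e he
    simp only [hR, Finset.mem_insert, Finset.mem_singleton] at he
    rcases he with rfl | rfl | rfl <;>
      simp only [SimpleGraph.mem_edgeFinset, he1, he2, he3, SimpleGraph.mem_edgeSet] <;>
      assumption
  have hRcard : R.card = 3 := by
    rw [hR, Finset.card_insert_of_notMem (by simp [hne12, hne13]),
      Finset.card_insert_of_notMem (by simp [hne23])]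
    rfl
  have hAcard : A.card = 3 := by
    rw [hA, Finset.card_insert_of_notMem (by simp [hna12, hna13]),
      Finset.card_insert_of_notMem (by simp [hna23])]
    rfl
  -- cardinality argument for disjointness
  have hcT := hT.card_edgeFinset
  have hcT' := hT'.card_edgeFinset
  have hEge : 3 ≤ T.edgeFinset.card := by
    have := Finset.card_le_card hRsub
    omega
  have hcard_union : ((T.edgeFinset \ R) ∪ A).card = (T.edgeFinset \ R).card + A.card := by
    rw [← hEfin, Finset.card_sdiff_of_subset hRsub, hRcard, hAcard]
    omega
  have hdisjA : Disjoint (T.edgeFinset \ R) A :=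
    Finset.card_union_eq_card_add_card.mp hcard_union
  -- added edges are not edges of T
  have hAnotE : ∀ a ∈ A, a ∉ T.edgeFinset := by
    intro a ha hmem
    by_cases haR : a ∈ R
    · exact hae a ha a haR rfl
    · exact (Finset.disjoint_right.mp hdisjA ha) (Finset.mem_sdiff.mpr ⟨hmem, haR⟩)
  have hn13 : ¬ T.Adj u₁ u₃ := by
    intro h
    exact hAnotE a1 (by simp [hA]) (by simpa [SimpleGraph.mem_edgeFinset, ha1] using h)
  have hnu2 : ¬ T.Adj u u₂ := by
    intro h
    exact hAnotE a2 (by simp [hA]) (by simpa [SimpleGraph.mem_edgeFinset, ha2] using h)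
  have hn2v : ¬ T.Adj u₂ v := by
    intro h
    exact hAnotE a3 (by simp [hA]) (by simpa [SimpleGraph.mem_edgeFinset, ha3] using h)
  -- adjacency characterization
  have hAdj : ∀ a b : V, T'.Adj a b ↔
      (T.Adj a b ∧ s(a, b) ≠ e1 ∧ s(a, b) ≠ e2 ∧ s(a, b) ≠ e3) ∨
      (s(a, b) = a1 ∨ s(a, b) = a2 ∨ s(a, b) = a3) := by
    intro a b
    have hmem := Set.ext_iff.mp hE s(a, b)
    simp only [Set.mem_union, Set.mem_diff, Set.mem_insert_iff, Set.mem_singleton_iff,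
      SimpleGraph.mem_edgeSet] at hmem
    rw [hmem]
    simp only [not_or, ne_eq]
  -- degree swap helper
  have key : ∀ (x a b : V), T.Adj x a → ¬ T.Adj x b →
      (∀ y, T'.Adj x y ↔ (T.Adj x y ∧ y ≠ a) ∨ y = b) → T'.degree x = T.degree x := by
    intro x a b hxa hxb hiff
    have hnb : T'.neighborFinset x = insert b ((T.neighborFinset x).erase a) := by
      ext y
      simp only [SimpleGraph.mem_neighborFinset, hiff y, Finset.mem_insert, Finset.mem_erase,
        SimpleGraph.mem_neighborFinset]
      tauto
    rw [← SimpleGraph.card_neighborFinset_eq_degree, hnb,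
      Finset.card_insert_of_notMem (by simp [SimpleGraph.mem_neighborFinset, hxb]),
      Finset.card_erase_of_mem (by simpa [SimpleGraph.mem_neighborFinset] using hxa),
      SimpleGraph.card_neighborFinset_eq_degree]
    have hpos : 0 < T.degree x := by
      rw [← SimpleGraph.card_neighborFinset_eq_degree, Finset.card_pos]
      exact ⟨a, by simpa [SimpleGraph.mem_neighborFinset] using hxa⟩
    omega
  -- degrees preserved
  have hdg1 : T'.degree u₁ = T.degree u₁ := by
    apply key u₁ u₂ u₃ h12 hn13
    intro y
    rw [hAdj]
    clear hE hEfin hAdj key hAnotE hdisjA hcard_union hne hdisj hdegT' hRsub hcT hcT' hEge hRcard hAcard hT hT'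
    simp [he1, he2, he3, ha1, ha2, ha3, Sym2.eq_iff, h12', h23', h13', huu1, huu2, huu3, hvu1, hvu2, hvu3, huv', Ne.symm h12', Ne.symm h23', Ne.symm h13', Ne.symm huu1, Ne.symm huu2, Ne.symm huu3, Ne.symm hvu1, Ne.symm hvu2, Ne.symm hvu3, Ne.symm huv']
    try tauto
  have hdg3 : T'.degree u₃ = T.degree u₃ := by
    apply key u₃ u₂ u₁ h23.symm (fun h => hn13 h.symm)
    intro y
    rw [hAdj]
    clear hE hEfin hAdj key hAnotE hdisjA hcard_union hne hdisj hdegT' hRsub hcT hcT' hEge hRcard hAcard hT hT'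
    simp [he1, he2, he3, ha1, ha2, ha3, Sym2.eq_iff, h12', h23', h13', huu1, huu2, huu3, hvu1, hvu2, hvu3, huv', Ne.symm h12', Ne.symm h23', Ne.symm h13', Ne.symm huu1, Ne.symm huu2, Ne.symm huu3, Ne.symm hvu1, Ne.symm hvu2, Ne.symm hvu3, Ne.symm huv']
    try tauto
  have hdgu : T'.degree u = T.degree u := by
    apply key u v u₂ huv hnu2
    intro y
    rw [hAdj]
    clear hE hEfin hAdj key hAnotE hdisjA hcard_union hne hdisj hdegT' hRsub hcT hcT' hEge hRcard hAcard hT hT'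
    simp [he1, he2, he3, ha1, ha2, ha3, Sym2.eq_iff, h12', h23', h13', huu1, huu2, huu3, hvu1, hvu2, hvu3, huv', Ne.symm h12', Ne.symm h23', Ne.symm h13', Ne.symm huu1, Ne.symm huu2, Ne.symm huu3, Ne.symm hvu1, Ne.symm hvu2, Ne.symm hvu3, Ne.symm huv']
    try tauto
  have hdgv : T'.degree v = T.degree v := by
    apply key v u u₂ huv.symm (fun h => hn2v h.symm)
    intro y
    rw [hAdj]
    clear hE hEfin hAdj key hAnotE hdisjA hcard_union hne hdisj hdegT' hRsub hcT hcT' hEge hRcard hAcard hT hT'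
    simp [he1, he2, he3, ha1, ha2, ha3, Sym2.eq_iff, h12', h23', h13', huu1, huu2, huu3, hvu1, hvu2, hvu3, huv', Ne.symm h12', Ne.symm h23', Ne.symm h13', Ne.symm huu1, Ne.symm huu2, Ne.symm huu3, Ne.symm hvu1, Ne.symm hvu2, Ne.symm hvu3, Ne.symm huv']
    try tauto
  -- u₂ : neighbors {u₁, u₃} become {u, v}
  have hN2 : T.neighborFinset u₂ = {u₁, u₃} := by
    have hsub : ({u₁, u₃} : Finset V) ⊆ T.neighborFinset u₂ := by
      intro y hy
      simp only [Finset.mem_insert, Finset.mem_singleton] at hy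
      rcases hy with rfl | rfl
      · simpa [SimpleGraph.mem_neighborFinset] using h12.symm
      · simpa [SimpleGraph.mem_neighborFinset] using h23
    have hc : (T.neighborFinset u₂).card ≤ ({u₁, u₃} : Finset V).card := by
      rw [Finset.card_insert_of_notMem (by simp [h13']), Finset.card_singleton,
        SimpleGraph.card_neighborFinset_eq_degree, ← hdegT, hd2]
    exact (Finset.eq_of_subset_of_card_le hsub hc).symm
  have hdg2 : T'.degree u₂ = T.degree u₂ := by
    have hN2' : T'.neighborFinset u₂ = {u, v} := by
      ext y
      simp only [SimpleGraph.mem_neighborFinset, hAdj, Finset.mem_insert, Finset.mem_singleton]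
      clear hE hEfin hAdj hAnotE hdisjA hcard_union hne hdisj hdegT' hRsub hcT hcT' hEge hRcard hAcard hT hT' key
      simp [he1, he2, he3, ha1, ha2, ha3, Sym2.eq_iff, h12', h23', h13', huu1, huu2, huu3, hvu1, hvu2, hvu3, huv', Ne.symm h12', Ne.symm h23', Ne.symm h13', Ne.symm huu1, Ne.symm huu2, Ne.symm huu3, Ne.symm hvu1, Ne.symm hvu2, Ne.symm hvu3, Ne.symm huv']
      intro h h1 h3
      exfalso
      have hmem : y ∈ T.neighborFinset u₂ := by
        simpa [SimpleGraph.mem_neighborFinset] using h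
      rw [hN2] at hmem
      simp only [Finset.mem_insert, Finset.mem_singleton] at hmem
      rcases hmem with rfl | rfl
      · exact h1 rfl
      · exact h3 rfl
    rw [← SimpleGraph.card_neighborFinset_eq_degree, ← SimpleGraph.card_neighborFinset_eq_degree,
      hN2', hN2, Finset.card_insert_of_notMem (by simp [huv']),
      Finset.card_insert_of_notMem (by simp [h13'])]
    simp
  -- generic vertices
  have hdgo : ∀ x, x ≠ u₁ → x ≠ u₂ → x ≠ u₃ → x ≠ u → x ≠ v → T'.degree x = T.degree x := by
    intro x hx1 hx2 hx3 hxu hxv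
    have : T'.neighborFinset x = T.neighborFinset x := by
      ext y
      simp only [SimpleGraph.mem_neighborFinset, hAdj]
      clear hE hEfin hAdj hAnotE hdisjA hcard_union hne hdisj hdegT' hRsub hcT hcT' hEge hRcard hAcard hT hT' key
      simp [he1, he2, he3, ha1, ha2, ha3, Sym2.eq_iff, hx1, hx2, hx3, hxu, hxv]
    rw [← SimpleGraph.card_neighborFinset_eq_degree, ← SimpleGraph.card_neighborFinset_eq_degree,
      this]
  have hdeg : ∀ x, deg T' x = deg T x := by
    intro x
    rw [hdegT, hdegT']
    by_cases hx1 : x = u₁; · subst hx1; exact hdg1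
    by_cases hx2 : x = u₂; · subst hx2; exact hdg2
    by_cases hx3 : x = u₃; · subst hx3; exact hdg3
    by_cases hxu : x = u; · subst hxu; exact hdgu
    by_cases hxv : x = v; · subst hxv; exact hdgv
    exact hdgo x hx1 hx2 hx3 hxu hxv
  -- the weight function
  set f : Sym2 V → ℤ := Sym2.lift ⟨fun a b => ((deg T a : ℤ) - 1) * ((deg T b : ℤ) - 1),
    fun a b => by ring⟩ with hf
  have hWT : Wp T = ∑ e ∈ T.edgeFinset, f e := rfl
  have hWT' : Wp T' = ∑ e ∈ T'.edgeFinset, f e := by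
    show (∑ e ∈ T'.edgeFinset,
      Sym2.lift ⟨fun a b => ((deg T' a : ℤ) - 1) * ((deg T' b : ℤ) - 1),
        fun a b => by ring⟩ e) = _
    apply Finset.sum_congr rfl
    intro e _
    induction e using Sym2.ind with
    | _ a b => simp [hf, Sym2.lift_mk, hdeg]
  have hsum : Wp T - Wp T' = (∑ e ∈ R, f e) - (∑ e ∈ A, f e) := by
    rw [hWT, hWT', hEfin, Finset.sum_union hdisjA, ← Finset.sum_sdiff hRsub]
    ring
  have hsumR : ∑ e ∈ R, f e = ((deg T u₁ : ℤ) - 1) * ((deg T u₂ : ℤ) - 1)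
      + ((deg T u₂ : ℤ) - 1) * ((deg T u₃ : ℤ) - 1)
      + ((deg T u : ℤ) - 1) * ((deg T v : ℤ) - 1) := by
    rw [hR, Finset.sum_insert (by simp [hne12, hne13]), Finset.sum_insert (by simp [hne23]),
      Finset.sum_singleton]
    simp only [he1, he2, he3, hf, Sym2.lift_mk]
    ring
  have hsumA : ∑ e ∈ A, f e = ((deg T u₁ : ℤ) - 1) * ((deg T u₃ : ℤ) - 1)
      + ((deg T u : ℤ) - 1) * ((deg T u₂ : ℤ) - 1)
      + ((deg T u₂ : ℤ) - 1) * ((deg T v : ℤ) - 1) := by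
    rw [hA, Finset.sum_insert (by simp [hna12, hna13]), Finset.sum_insert (by simp [hna23]),
      Finset.sum_singleton]
    simp only [ha1, ha2, ha3, hf, Sym2.lift_mk]
    ring
  have hd2' : (deg T u₂ : ℤ) = 2 := by exact_mod_cast congrArg (Nat.cast : ℕ → ℤ) hd2
  have hd3' : (deg T u₃ : ℤ) = 2 := by exact_mod_cast congrArg (Nat.cast : ℕ → ℤ) hd3
  constructor
  · rw [hsum, hsumR, hsumA, hd2', hd3']
    ring
  · have h3u : (3 : ℤ) ≤ (deg T u : ℤ) := by exact_mod_cast hdu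
    have h3v : (3 : ℤ) ≤ (deg T v : ℤ) := by exact_mod_cast hdv
    nlinarith
end

section
/- Let T be a tree that contains a pendent path P: u₀u₁…u_t v with t ≥ 1, where deg(u₀) = 1, deg(u₁) = ⋯ = deg(u_t) = 2, deg(v) ≥ 3, and v has a neighbor w ≠ u_t with deg(w) ≥ 2 lying on an internal path. Let T′ = T − {u_{t−1}u_t, vw} + {vu₀, u_{t−1}w}. Then W_p(T) − W_p(T′) = (deg(w) − 1)(deg(v) − 2) > 0. -/
set_option maxHeartbeats 1000000 in
theorem wp_pendent_path_swap {V : Type*} [Fintype V] (T T' : SimpleGraph V)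
    (hT : T.IsTree) (hT' : T'.IsTree)
    (t : ℕ) (ht : 1 ≤ t) (p : ℕ → V) (v w : V)
    (hinj : Set.InjOn p (Set.Iic t))
    (hadj : ∀ i < t, T.Adj (p i) (p (i + 1)))
    (hpv : T.Adj (p t) v)
    (hd0 : deg T (p 0) = 1)
    (hd2 : ∀ i, 1 ≤ i → i ≤ t → deg T (p i) = 2)
    (hdv : 3 ≤ deg T v)
    (hvw : T.Adj v w) (hw : w ≠ p t) (hdw : 2 ≤ deg T w)
    (hE : T'.edgeSet =
      (T.edgeSet \ {s(p (t - 1), p t), s(v, w)}) ∪ {s(v, p 0), s(p (t - 1), w)}) :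
    Wp T - Wp T' = ((deg T w : ℤ) - 1) * ((deg T v : ℤ) - 2) ∧
    (0 : ℤ) < ((deg T w : ℤ) - 1) * ((deg T v : ℤ) - 2) := by
  classical
  obtain ⟨k, rfl⟩ : ∃ k, t = k + 1 := ⟨t - 1, by omega⟩
  simp only [Nat.add_sub_cancel] at hE
  -- basic distinctness
  have pne : ∀ i j, i ≤ k + 1 → j ≤ k + 1 → i ≠ j → p i ≠ p j := by
    intro i j hi hj hij hpq
    exact hij (hinj (Set.mem_Iic.mpr hi) (Set.mem_Iic.mpr hj) hpq)
  have hvp : ∀ i ≤ k + 1, v ≠ p i := by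
    intro i hi h
    rcases Nat.eq_zero_or_pos i with h0 | h1
    · subst h0; rw [h] at hdv; omega
    · have := hd2 i h1 hi; rw [h] at hdv; omega
  -- neighbor set characterizations
  have hcard : ∀ x, (T.neighborFinset x).card = deg T x := fun _ => rfl
  have hN0 : T.neighborFinset (p 0) = {p 1} := by
    have hsub : ({p 1} : Finset V) ⊆ T.neighborFinset (p 0) := by
      intro y hy
      simp only [Finset.mem_singleton] at hy
      subst hy
      exact (SimpleGraph.mem_neighborFinset _ _ _).mpr (hadj 0 (by omega))
    exact (Finset.eq_of_subset_of_card_le hsub (by rw [hcard, hd0]; simp)).symm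
  have hNt : T.neighborFinset (p (k + 1)) = {p k, v} := by
    have hsub : ({p k, v} : Finset V) ⊆ T.neighborFinset (p (k + 1)) := by
      intro y hy
      simp only [Finset.mem_insert, Finset.mem_singleton] at hy
      rcases hy with rfl | rfl
      · have h := hadj k (by omega)
        exact (SimpleGraph.mem_neighborFinset _ _ _).mpr h.symm
      · exact (SimpleGraph.mem_neighborFinset _ _ _).mpr hpv
    refine (Finset.eq_of_subset_of_card_le hsub ?_).symm
    rw [hcard, hd2 (k+1) (by omega) le_rfl, Finset.card_insert_of_notMem (by
      simp only [Finset.mem_singleton]; exact fun h => hvp k (by omega) h.symm)]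
    simp
  have hNi : ∀ i, 1 ≤ i → i ≤ k → T.neighborFinset (p i) = {p (i - 1), p (i + 1)} := by
    intro i h1 h2
    have hi1 : i - 1 + 1 = i := by omega
    have hsub : ({p (i - 1), p (i + 1)} : Finset V) ⊆ T.neighborFinset (p i) := by
      intro y hy
      simp only [Finset.mem_insert, Finset.mem_singleton] at hy
      rcases hy with rfl | rfl
      · have h := hadj (i - 1) (by omega)
        rw [hi1] at h
        exact (SimpleGraph.mem_neighborFinset _ _ _).mpr h.symm
      · exact (SimpleGraph.mem_neighborFinset _ _ _).mpr (hadj i (by omega))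
    refine (Finset.eq_of_subset_of_card_le hsub ?_).symm
    rw [hcard, hd2 i h1 (by omega), Finset.card_insert_of_notMem (by
      simp only [Finset.mem_singleton]; exact pne (i-1) (i+1) (by omega) (by omega) (by omega))]
    simp
  have hwp : ∀ i ≤ k + 1, w ≠ p i := by
    intro i hi h
    rcases Nat.eq_zero_or_pos i with h0 | h1
    · subst h0; rw [h] at hdw; omega
    rcases Nat.lt_or_ge i (k + 1) with h2 | h2
    · have hvN : v ∈ T.neighborFinset (p i) := by
        rw [SimpleGraph.mem_neighborFinset, ← h]
        exact hvw.symm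
      rw [hNi i h1 (by omega)] at hvN
      simp only [Finset.mem_insert, Finset.mem_singleton] at hvN
      rcases hvN with h3 | h3
      · exact hvp (i - 1) (by omega) h3
      · exact hvp (i + 1) (by omega) h3
    · have : i = k + 1 := by omega
      subst this
      exact hw h
  have hv0 : v ≠ p 0 := hvp 0 (by omega)
  have hvk : v ≠ p k := hvp k (by omega)
  have hvk1 : v ≠ p (k + 1) := hvp (k + 1) le_rfl
  have hw0 : w ≠ p 0 := hwp 0 (by omega)
  have hwk : w ≠ p k := hwp k (by omega)
  have hvw' : v ≠ w := hvw.ne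
  have hkk1 : p k ≠ p (k + 1) := pne k (k + 1) (by omega) le_rfl (by omega)
  -- non-adjacencies
  have hnav0 : ¬ T.Adj v (p 0) := by
    intro h
    have : v ∈ T.neighborFinset (p 0) := (SimpleGraph.mem_neighborFinset _ _ _).mpr h.symm
    rw [hN0] at this
    simp only [Finset.mem_singleton] at this
    exact hvp 1 (by omega) this
  have hnawk : ¬ T.Adj (p k) w := by
    intro h
    have hmem : w ∈ T.neighborFinset (p k) := (SimpleGraph.mem_neighborFinset _ _ _).mpr h
    rcases Nat.eq_zero_or_pos k with h0 | h1
    · subst h0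
      rw [hN0] at hmem
      simp only [Finset.mem_singleton] at hmem
      exact hwp 1 (by omega) hmem
    · rw [hNi k h1 le_rfl] at hmem
      simp only [Finset.mem_insert, Finset.mem_singleton] at hmem
      rcases hmem with h3 | h3
      · exact hwp (k - 1) (by omega) h3
      · exact hw h3
  -- adjacency in T'
  have hAdj' : ∀ a b : V, T'.Adj a b ↔
      ((T.Adj a b ∧ s(a, b) ≠ s(p k, p (k + 1)) ∧ s(a, b) ≠ s(v, w)) ∨
        s(a, b) = s(v, p 0) ∨ s(a, b) = s(p k, w)) := by
    intro a b
    rw [← SimpleGraph.mem_edgeSet, hE]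
    simp only [Set.mem_union, Set.mem_diff, Set.mem_insert_iff, Set.mem_singleton_iff,
      SimpleGraph.mem_edgeSet]
    tauto
  have hcard' : ∀ x, (T'.neighborFinset x).card = deg T' x := fun _ => rfl
  have hz1 : ∀ y, T.Adj (p 0) y → y = p 1 := by
    intro y h
    have hy : y ∈ T.neighborFinset (p 0) := (SimpleGraph.mem_neighborFinset _ _ _).mpr h
    rw [hN0] at hy
    simpa using hy
  have hu0 : p (k + 1) ≠ p 0 := pne (k + 1) 0 le_rfl (by omega) (by omega)
  -- degree of v in T'
  have hwmemv : w ∈ T.neighborFinset v := (SimpleGraph.mem_neighborFinset _ _ _).mpr hvw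
  have hd'v : deg T' v = deg T v := by
    have hNv : T'.neighborFinset v = insert (p 0) ((T.neighborFinset v).erase w) := by
      ext y
      simp only [ne_eq, SimpleGraph.mem_neighborFinset, hAdj', Sym2.eq_iff, Finset.mem_insert,
        Finset.mem_erase, hv0, hvk, hvk1, hvw', false_and, and_false, or_false, false_or,
        true_and, eq_self_iff_true, not_or, not_false_iff, and_true]
      tauto
    rw [← hcard', ← hcard, hNv, Finset.card_insert_of_notMem (by
        simp only [Finset.mem_erase]
        exact fun h => hnav0 ((SimpleGraph.mem_neighborFinset _ _ _).mp h.2)),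
      Finset.card_erase_of_mem hwmemv]
    have : 0 < (T.neighborFinset v).card := Finset.card_pos.mpr ⟨w, hwmemv⟩
    omega
  -- degree of w in T'
  have hd'w : deg T' w = deg T w := by
    have hvmemw : v ∈ T.neighborFinset w := (SimpleGraph.mem_neighborFinset _ _ _).mpr hvw.symm
    have hNw : T'.neighborFinset w = insert (p k) ((T.neighborFinset w).erase v) := by
      ext y
      simp only [ne_eq, SimpleGraph.mem_neighborFinset, hAdj', Sym2.eq_iff, Finset.mem_insert,
        Finset.mem_erase, hw0, hwk, hw, hvw'.symm, false_and, and_false, or_false, false_or,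
        true_and, eq_self_iff_true, not_or, not_false_iff, and_true]
      tauto
    rw [← hcard', ← hcard, hNw, Finset.card_insert_of_notMem (by
        simp only [Finset.mem_erase]
        exact fun h => hnawk ((SimpleGraph.mem_neighborFinset _ _ _).mp h.2).symm),
      Finset.card_erase_of_mem hvmemw]
    have : 0 < (T.neighborFinset w).card := Finset.card_pos.mpr ⟨v, hvmemw⟩
    omega
  -- degree of p (k+1) in T'
  have hd'u : deg T' (p (k + 1)) = 1 := by
    have hNu : T'.neighborFinset (p (k + 1)) = (T.neighborFinset (p (k + 1))).erase (p k) := by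
      ext y
      simp only [ne_eq, SimpleGraph.mem_neighborFinset, hAdj', Sym2.eq_iff, Finset.mem_erase,
        hkk1.symm, hvk1.symm, hw.symm, hu0, false_and, and_false, or_false, false_or,
        true_and, eq_self_iff_true, not_or, not_false_iff, and_true]
      tauto
    have hkmem : p k ∈ T.neighborFinset (p (k + 1)) :=
      (SimpleGraph.mem_neighborFinset _ _ _).mpr (hadj k (by omega)).symm
    rw [← hcard', hNu, Finset.card_erase_of_mem hkmem, hcard, hd2 (k + 1) (by omega) le_rfl]
  -- degree of p 0 in T'
  have hd'z : deg T' (p 0) = 2 := by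
    rcases Nat.eq_zero_or_pos k with h0 | h1
    · subst h0
      have hNz : T'.neighborFinset (p 0) = {v, w} := by
        ext y
        simp only [ne_eq, SimpleGraph.mem_neighborFinset, hAdj', Sym2.eq_iff, Finset.mem_insert,
          Finset.mem_singleton, hv0.symm, hw0.symm, hu0.symm, hkk1, false_and, and_false,
          or_false, false_or, true_and, eq_self_iff_true, not_or, not_false_iff, and_true]
        constructor
        · rintro (⟨h1, h2⟩ | h | h)
          · exact absurd (hz1 y h1) (by tauto)
          · tauto
          · tauto
        · rintro (rfl | rfl) <;> tauto
      rw [← hcard', hNz, Finset.card_insert_of_notMem (by simpa using hvw'), Finset.card_singleton]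
    · have h0k : p 0 ≠ p k := pne 0 k (by omega) (by omega) (by omega)
      have hNz : T'.neighborFinset (p 0) = insert v (T.neighborFinset (p 0)) := by
        ext y
        simp only [ne_eq, SimpleGraph.mem_neighborFinset, hAdj', Sym2.eq_iff, Finset.mem_insert,
          h0k, hu0.symm, hv0.symm, hw0.symm, false_and, and_false, or_false, false_or,
          true_and, eq_self_iff_true, not_or, not_false_iff, and_true]
        tauto
      rw [← hcard', hNz, Finset.card_insert_of_notMem (by
          simp only [SimpleGraph.mem_neighborFinset]
          exact fun h => hnav0 h.symm), hcard, hd0]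
  -- degree preservation
  have hdeq : ∀ x, x ≠ p 0 → x ≠ p (k + 1) → deg T' x = deg T x := by
    intro x hx0 hxt
    by_cases hxv : x = v
    · subst hxv; exact hd'v
    by_cases hxw : x = w
    · subst hxw; exact hd'w
    by_cases hxk : x = p k
    · subst hxk
      have hk1 : 1 ≤ k := by
        rcases Nat.eq_zero_or_pos k with h0 | h1
        · exact absurd rfl (h0 ▸ hx0)
        · exact h1
      have hNx : T'.neighborFinset (p k) =
          insert w ((T.neighborFinset (p k)).erase (p (k + 1))) := by
        ext y
        simp only [ne_eq, SimpleGraph.mem_neighborFinset, hAdj', Sym2.eq_iff, Finset.mem_insert,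
          Finset.mem_erase, hkk1, Ne.symm hvk, Ne.symm hwk, hx0, false_and, and_false,
          or_false, false_or, true_and, eq_self_iff_true, not_or, not_false_iff, and_true]
        tauto
      have hmem : p (k + 1) ∈ T.neighborFinset (p k) :=
        (SimpleGraph.mem_neighborFinset _ _ _).mpr (hadj k (by omega))
      rw [← hcard', ← hcard, hNx, Finset.card_insert_of_notMem (by
          simp only [Finset.mem_erase]
          exact fun h => hnawk ((SimpleGraph.mem_neighborFinset _ _ _).mp h.2)),
        Finset.card_erase_of_mem hmem]
      have : 0 < (T.neighborFinset (p k)).card := Finset.card_pos.mpr ⟨_, hmem⟩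
      omega
    · have hNx : T'.neighborFinset x = T.neighborFinset x := by
        ext y
        simp only [ne_eq, SimpleGraph.mem_neighborFinset, hAdj', Sym2.eq_iff, hx0, hxt, hxv,
          hxw, hxk, false_and, false_or, or_false, not_or, not_false_iff, and_true]
      rw [← hcard', ← hcard, hNx]
  -- the weight functions
  set F : Sym2 V → ℤ := Sym2.lift ⟨fun a b => ((deg T a : ℤ) - 1) * ((deg T b : ℤ) - 1),
    fun a b => by ring⟩ with hFdef
  set F' : Sym2 V → ℤ := Sym2.lift ⟨fun a b => ((deg T' a : ℤ) - 1) * ((deg T' b : ℤ) - 1),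
    fun a b => by ring⟩ with hF'def
  have hF : ∀ a b : V, F s(a, b) = ((deg T a : ℤ) - 1) * ((deg T b : ℤ) - 1) := fun a b => rfl
  have hF' : ∀ a b : V, F' s(a, b) = ((deg T' a : ℤ) - 1) * ((deg T' b : ℤ) - 1) := fun a b => rfl
  have hWpT : Wp T = ∑ e ∈ T.edgeFinset, F e := rfl
  have hWpT' : Wp T' = ∑ e ∈ T'.edgeFinset, F' e := rfl
  -- edge memberships
  have he1 : s(p k, p (k + 1)) ∈ T.edgeFinset := by
    rw [SimpleGraph.mem_edgeFinset, SimpleGraph.mem_edgeSet]; exact hadj k (by omega)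
  have he2 : s(v, w) ∈ T.edgeFinset := by
    rw [SimpleGraph.mem_edgeFinset, SimpleGraph.mem_edgeSet]; exact hvw
  have hg1 : s(p (k + 1), v) ∈ T.edgeFinset := by
    rw [SimpleGraph.mem_edgeFinset, SimpleGraph.mem_edgeSet]; exact hpv
  have hg2 : s(p 0, p 1) ∈ T.edgeFinset := by
    rw [SimpleGraph.mem_edgeFinset, SimpleGraph.mem_edgeSet]; exact hadj 0 (by omega)
  have hf1 : s(v, p 0) ∉ T.edgeFinset := by
    rw [SimpleGraph.mem_edgeFinset, SimpleGraph.mem_edgeSet]; exact hnav0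
  have hf2 : s(p k, w) ∉ T.edgeFinset := by
    rw [SimpleGraph.mem_edgeFinset, SimpleGraph.mem_edgeSet]; exact fun h => hnawk h
  -- edge distinctness
  have he12 : s(p k, p (k + 1)) ≠ s(v, w) := by
    simp [Sym2.eq_iff, Ne.symm hvk, Ne.symm hvk1, Ne.symm hwk]
  have hg1e1 : s(p (k + 1), v) ≠ s(p k, p (k + 1)) := by
    simp [Sym2.eq_iff, Ne.symm hkk1, hvk, hvk1]
  have hg1e2 : s(p (k + 1), v) ≠ s(v, w) := by
    simp [Sym2.eq_iff, Ne.symm hvk1, Ne.symm hw, hvw']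
  have hf12 : s(v, p 0) ≠ s(p k, w) := by
    simp [Sym2.eq_iff, hvk, hvw', Ne.symm hw0]
  -- edge finset of T'
  have hEfin : T'.edgeFinset =
      (T.edgeFinset \ {s(p k, p (k + 1)), s(v, w)}) ∪ {s(v, p 0), s(p k, w)} := by
    apply Finset.coe_injective
    simp only [Finset.coe_union, Finset.coe_sdiff, Finset.coe_insert, Finset.coe_singleton,
      SimpleGraph.coe_edgeFinset, hE]
  have hsub12 : ({s(p k, p (k + 1)), s(v, w)} : Finset (Sym2 V)) ⊆ T.edgeFinset := by
    intro e he
    simp only [Finset.mem_insert, Finset.mem_singleton] at he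
    rcases he with rfl | rfl
    · exact he1
    · exact he2
  have hsplit1 : ∑ e ∈ T.edgeFinset, F e =
      ∑ e ∈ T.edgeFinset \ {s(p k, p (k + 1)), s(v, w)}, F e +
        (F s(p k, p (k + 1)) + F s(v, w)) := by
    rw [← Finset.sum_sdiff hsub12, Finset.sum_pair he12]
  have hdisj : Disjoint (T.edgeFinset \ {s(p k, p (k + 1)), s(v, w)})
      ({s(v, p 0), s(p k, w)} : Finset (Sym2 V)) := by
    rw [Finset.disjoint_right]
    intro e he
    simp only [Finset.mem_insert, Finset.mem_singleton] at he
    simp only [Finset.mem_sdiff]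
    rcases he with rfl | rfl
    · exact fun h => hf1 h.1
    · exact fun h => hf2 h.1
  have hsplit2 : ∑ e ∈ T'.edgeFinset, F' e =
      ∑ e ∈ T.edgeFinset \ {s(p k, p (k + 1)), s(v, w)}, F' e +
        (F' s(v, p 0) + F' s(p k, w)) := by
    rw [hEfin, Finset.sum_union hdisj, Finset.sum_pair hf12]
  -- safety: edges not incident to p 0 or p (k+1)
  have hsafe : ∀ x y : V, T.Adj x y → s(x, y) ≠ s(p k, p (k + 1)) →
      s(x, y) ≠ s(p (k + 1), v) → s(x, y) ≠ s(p 0, p 1) →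
      x ≠ p 0 ∧ x ≠ p (k + 1) := by
    intro x y hxy hne1 hne3 hne4
    constructor
    · rintro rfl
      exact hne4 (by rw [hz1 y hxy])
    · rintro rfl
      have hy : y ∈ T.neighborFinset (p (k + 1)) :=
        (SimpleGraph.mem_neighborFinset _ _ _).mpr hxy
      rw [hNt] at hy
      simp only [Finset.mem_insert, Finset.mem_singleton] at hy
      rcases hy with rfl | rfl
      · exact hne1 (Sym2.eq_iff.mpr (Or.inr ⟨rfl, rfl⟩))
      · exact hne3 rfl
  have hzero : ∀ e : Sym2 V, e ∈ T.edgeFinset → e ≠ s(p k, p (k + 1)) →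
      e ≠ s(p (k + 1), v) → e ≠ s(p 0, p 1) → F e - F' e = 0 := by
    intro e
    induction e using Sym2.ind with
    | _ x y =>
      intro hmem hne1 hne3 hne4
      have hxy : T.Adj x y := (SimpleGraph.mem_edgeSet T).mp
        ((SimpleGraph.mem_edgeFinset).mp hmem)
      have h1 := hsafe x y hxy hne1 hne3 hne4
      have h2 := hsafe y x hxy.symm (by rw [Sym2.eq_swap]; exact hne1)
        (by rw [Sym2.eq_swap]; exact hne3) (by rw [Sym2.eq_swap]; exact hne4)
      rw [hF, hF', hdeq x h1.1 h1.2, hdeq y h2.1 h2.2, sub_self]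
  -- numeric values
  have hA : (3 : ℤ) ≤ (deg T v : ℤ) := by exact_mod_cast hdv
  have hB : (2 : ℤ) ≤ (deg T w : ℤ) := by exact_mod_cast hdw
  have hFg1 : F s(p (k + 1), v) = (deg T v : ℤ) - 1 := by
    rw [hF, hd2 (k + 1) (by omega) le_rfl]; push_cast; ring
  have hF'g1 : F' s(p (k + 1), v) = 0 := by
    rw [hF', hd'u]; push_cast; ring
  have hFe2 : F s(v, w) = ((deg T v : ℤ) - 1) * ((deg T w : ℤ) - 1) := hF v w
  have hF'f1 : F' s(v, p 0) = (deg T v : ℤ) - 1 := by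
    rw [hF', hd'v, hd'z]; push_cast; ring
  -- final computation
  have hmain : Wp T - Wp T' = ((deg T w : ℤ) - 1) * ((deg T v : ℤ) - 2) := by
    rw [hWpT, hWpT', hsplit1, hsplit2]
    rcases Nat.eq_zero_or_pos k with h0 | h1
    · -- k = 0
      subst h0
      have hsubg : ({s(p (0 + 1), v)} : Finset (Sym2 V)) ⊆
          T.edgeFinset \ {s(p 0, p (0 + 1)), s(v, w)} := by
        intro e he
        simp only [Finset.mem_singleton] at he
        subst he
        simp only [Finset.mem_sdiff, Finset.mem_insert, Finset.mem_singleton]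
        exact ⟨hg1, by rintro (h | h); exact hg1e1 h; exact hg1e2 h⟩
      have hzero0 : ∑ e ∈ (T.edgeFinset \ {s(p 0, p (0 + 1)), s(v, w)}) \ {s(p (0 + 1), v)},
          (F e - F' e) = 0 := by
        apply Finset.sum_eq_zero
        intro e he
        simp only [Finset.mem_sdiff, Finset.mem_insert, Finset.mem_singleton, not_or] at he
        exact hzero e he.1.1 he.1.2.1 he.2 he.1.2.1
      have hsum : ∑ e ∈ T.edgeFinset \ {s(p 0, p (0 + 1)), s(v, w)}, F e -
          ∑ e ∈ T.edgeFinset \ {s(p 0, p (0 + 1)), s(v, w)}, F' e =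
          F s(p (0 + 1), v) - F' s(p (0 + 1), v) := by
        rw [← Finset.sum_sub_distrib, ← Finset.sum_sdiff hsubg, hzero0, Finset.sum_singleton,
          zero_add]
      have hFe1 : F s(p 0, p (0 + 1)) = 0 := by
        rw [hF, hd0]; push_cast; ring
      have hF'f2 : F' s(p 0, w) = (deg T w : ℤ) - 1 := by
        rw [hF', hd'z, hd'w]; push_cast; ring
      have : ∑ e ∈ T.edgeFinset \ {s(p 0, p (0 + 1)), s(v, w)}, F e +
          (F s(p 0, p (0 + 1)) + F s(v, w)) -
          (∑ e ∈ T.edgeFinset \ {s(p 0, p (0 + 1)), s(v, w)}, F' e +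
            (F' s(v, p 0) + F' s(p 0, w))) =
          (F s(p (0 + 1), v) - F' s(p (0 + 1), v)) +
            (F s(p 0, p (0 + 1)) + F s(v, w)) - (F' s(v, p 0) + F' s(p 0, w)) := by
        rw [← hsum]; ring
      rw [this, hFg1, hF'g1, hFe1, hFe2, hF'f1, hF'f2]
      ring
    · -- k ≥ 1
      have h0k : p 0 ≠ p k := pne 0 k (by omega) (by omega) (by omega)
      have h01 : p 0 ≠ p 1 := pne 0 1 (by omega) (by omega) (by omega)
      have hg2e1 : s(p 0, p 1) ≠ s(p k, p (k + 1)) := by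
        have h1k1 : p 0 ≠ p (k + 1) := Ne.symm hu0
        by_cases hk1 : k = 1
        · subst hk1
          simp [Sym2.eq_iff, h0k, h1k1, pne 1 2 (by omega) (by omega) (by omega)]
        · simp [Sym2.eq_iff, h1k1, pne 0 k (by omega) (by omega) (by omega),
            pne 1 k (by omega) (by omega) (by omega),
            pne 1 (k + 1) (by omega) (by omega) (by omega)]
      have hg2e2 : s(p 0, p 1) ≠ s(v, w) := by
        simp [Sym2.eq_iff, Ne.symm hv0, Ne.symm hw0, Ne.symm (hvp 1 (by omega)),
          Ne.symm (hwp 1 (by omega))]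
      have hg12 : s(p (k + 1), v) ≠ s(p 0, p 1) := by
        simp [Sym2.eq_iff, hu0, pne (k + 1) 1 le_rfl (by omega) (by omega), hv0,
          hvp 1 (by omega)]
      have hsubg : ({s(p (k + 1), v), s(p 0, p 1)} : Finset (Sym2 V)) ⊆
          T.edgeFinset \ {s(p k, p (k + 1)), s(v, w)} := by
        intro e he
        simp only [Finset.mem_insert, Finset.mem_singleton] at he
        simp only [Finset.mem_sdiff, Finset.mem_insert, Finset.mem_singleton, not_or]
        rcases he with rfl | rfl
        · exact ⟨hg1, hg1e1, hg1e2⟩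
        · exact ⟨hg2, hg2e1, hg2e2⟩
      have hzero0 : ∑ e ∈ (T.edgeFinset \ {s(p k, p (k + 1)), s(v, w)}) \
          {s(p (k + 1), v), s(p 0, p 1)}, (F e - F' e) = 0 := by
        apply Finset.sum_eq_zero
        intro e he
        simp only [Finset.mem_sdiff, Finset.mem_insert, Finset.mem_singleton, not_or] at he
        exact hzero e he.1.1 he.1.2.1 he.2.1 he.2.2
      have hsum : ∑ e ∈ T.edgeFinset \ {s(p k, p (k + 1)), s(v, w)}, F e -
          ∑ e ∈ T.edgeFinset \ {s(p k, p (k + 1)), s(v, w)}, F' e =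
          (F s(p (k + 1), v) - F' s(p (k + 1), v)) + (F s(p 0, p 1) - F' s(p 0, p 1)) := by
        rw [← Finset.sum_sub_distrib, ← Finset.sum_sdiff hsubg, hzero0, Finset.sum_pair hg12,
          zero_add]
      have hFe1 : F s(p k, p (k + 1)) = 1 := by
        rw [hF, hd2 k (by omega) (by omega), hd2 (k + 1) (by omega) le_rfl]; norm_num
      have hFg2 : F s(p 0, p 1) = 0 := by
        rw [hF, hd0]; push_cast; ring
      have hF'g2 : F' s(p 0, p 1) = 1 := by
        rw [hF', hd'z, hdeq (p 1) (Ne.symm h01) (pne 1 (k + 1) (by omega) le_rfl (by omega)),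
          hd2 1 le_rfl (by omega)]
        norm_num
      have hF'f2 : F' s(p k, w) = (deg T w : ℤ) - 1 := by
        rw [hF', hdeq (p k) (Ne.symm h0k) hkk1, hd2 k (by omega) (by omega), hd'w]
        push_cast; ring
      have harr : ∑ e ∈ T.edgeFinset \ {s(p k, p (k + 1)), s(v, w)}, F e +
          (F s(p k, p (k + 1)) + F s(v, w)) -
          (∑ e ∈ T.edgeFinset \ {s(p k, p (k + 1)), s(v, w)}, F' e +
            (F' s(v, p 0) + F' s(p k, w))) =
          ((F s(p (k + 1), v) - F' s(p (k + 1), v)) + (F s(p 0, p 1) - F' s(p 0, p 1))) +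
            (F s(p k, p (k + 1)) + F s(v, w)) - (F' s(v, p 0) + F' s(p k, w)) := by
        rw [← hsum]; ring
      rw [harr, hFg1, hF'g1, hFg2, hF'g2, hFe1, hFe2, hF'f1, hF'f2]
      ring
  refine ⟨hmain, ?_⟩
  nlinarith [hA, hB]
end

section
/- Let T be a tree containing a vertex z of degree 2 with non-pendent neighbors x and y satisfying 4 < deg(x) + deg(y) < 8, and containing an adjacent pair of branching vertices x′, y′ (with edge x′y′ disjoint from x, z, y) such that deg(x′) + deg(y′) > deg(x) + deg(y), where all vertices have degree at most 4. Let T′ = T − {xz, zy, x′y′} + {xy, x′z, zy′}. Then W_p(T) − W_p(T′) = (deg(x′)deg(y′) − 2(deg(x′) + deg(y′))) − (deg(x)deg(y) − 2(deg(x) + deg(y))) > 0. -/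
lemma deg_eq_card_filter {V : Type*} [Fintype V] [DecidableEq V] (G : SimpleGraph V)
    [DecidableRel G.Adj] (v : V) :
    deg G v = (Finset.univ.filter (G.Adj v)).card := by
  unfold deg
  rw [← SimpleGraph.card_neighborSet_eq_degree, ← SimpleGraph.neighborFinset_eq_filter,
    SimpleGraph.neighborFinset_def, Set.toFinset_card]
  congr!

set_option maxHeartbeats 3200000 in
theorem wp_subdivision_swap {V : Type*} [Fintype V] (T T' : SimpleGraph V)
    (hT : T.IsTree) (hT' : T'.IsTree)
    (hmax : ∀ z : V, deg T z ≤ 4)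
    (x y z x' y' : V)
    (hdz : deg T z = 2) (hzx : T.Adj z x) (hzy : T.Adj z y) (hxy : x ≠ y)
    (hdx : 2 ≤ deg T x) (hdy : 2 ≤ deg T y)
    (hsum1 : 4 < deg T x + deg T y) (hsum2 : deg T x + deg T y < 8)
    (hadj' : T.Adj x' y') (hdx' : 3 ≤ deg T x') (hdy' : 3 ≤ deg T y')
    (hdisj : ({x', y'} : Set V) ∩ {x, z, y} = ∅)
    (hbig : deg T x + deg T y < deg T x' + deg T y')
    (hE : T'.edgeSet =
      (T.edgeSet \ {s(x, z), s(z, y), s(x', y')}) ∪ {s(x, y), s(x', z), s(z, y')}) :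
    Wp T - Wp T' =
      ((deg T x' : ℤ) * (deg T y' : ℤ) - 2 * ((deg T x' : ℤ) + (deg T y' : ℤ))) -
      ((deg T x : ℤ) * (deg T y : ℤ) - 2 * ((deg T x : ℤ) + (deg T y : ℤ))) ∧
    (0 : ℤ) <
      ((deg T x' : ℤ) * (deg T y' : ℤ) - 2 * ((deg T x' : ℤ) + (deg T y' : ℤ))) -
      ((deg T x : ℤ) * (deg T y : ℤ) - 2 * ((deg T x : ℤ) + (deg T y : ℤ))) := by
  classical
  -- basic distinctness facts
  have hd : ∀ a ∈ ({x', y'} : Set V), a ∉ ({x, z, y} : Set V) := by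
    intro a h1 h2
    have : a ∈ ({x', y'} : Set V) ∩ {x, z, y} := ⟨h1, h2⟩
    rw [hdisj] at this
    exact this
  have hx'x : x' ≠ x := fun h => hd x' (by simp) (by simp [h])
  have hx'z : x' ≠ z := fun h => hd x' (by simp) (by simp [h])
  have hx'y : x' ≠ y := fun h => hd x' (by simp) (by simp [h])
  have hy'x : y' ≠ x := fun h => hd y' (by simp) (by simp [h])
  have hy'z : y' ≠ z := fun h => hd y' (by simp) (by simp [h])
  have hy'y : y' ≠ y := fun h => hd y' (by simp) (by simp [h])
  have hzxne : z ≠ x := hzx.ne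
  have hzyne : z ≠ y := hzy.ne
  have hx'y' : x' ≠ y' := hadj'.ne
  -- x and y are not adjacent in T
  have hnxy : ¬ T.Adj x y := by
    intro h
    set p1 : T.Walk x y := h.toWalk with hp1def
    have hp1 : p1.IsPath := by
      simp [hp1def, SimpleGraph.Walk.isPath_def, hxy]
    set p2 : T.Walk x y := SimpleGraph.Walk.cons hzx.symm hzy.toWalk with hp2def
    have hp2 : p2.IsPath := by
      simp [SimpleGraph.Walk.isPath_def, hp2def, hxy, hzx.ne', hzy.ne]
    have heq : p1 = p2 := (hT.existsUnique_path x y).unique hp1 hp2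
    have : p1.length = p2.length := by rw [heq]
    simp [hp1def, hp2def] at this
  -- the neighbors of z are exactly x and y
  have hNz : ({x, y} : Finset V) = Finset.univ.filter (T.Adj z) := by
    apply Finset.eq_of_subset_of_card_le
    · intro a
      simp only [Finset.mem_insert, Finset.mem_singleton, Finset.mem_filter,
        Finset.mem_univ, true_and]
      rintro (rfl | rfl)
      exacts [hzx, hzy]
    · rw [← deg_eq_card_filter, hdz]
      simp [hxy]
  have hnzx' : ¬ T.Adj z x' := by
    intro h
    have : x' ∈ ({x, y} : Finset V) := by
      rw [hNz]; simp [h]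
    simp only [Finset.mem_insert, Finset.mem_singleton] at this
    rcases this with h | h
    exacts [hx'x h, hx'y h]
  have hnzy' : ¬ T.Adj z y' := by
    intro h
    have : y' ∈ ({x, y} : Finset V) := by
      rw [hNz]; simp [h]
    simp only [Finset.mem_insert, Finset.mem_singleton] at this
    rcases this with h | h
    exacts [hy'x h, hy'y h]
  -- adjacency in T'
  have hA : ∀ a b : V, T'.Adj a b ↔
      ((T.Adj a b ∧ ¬(s(a,b) = s(x,z) ∨ s(a,b) = s(z,y) ∨ s(a,b) = s(x',y'))) ∨
        (s(a,b) = s(x,y) ∨ s(a,b) = s(x',z) ∨ s(a,b) = s(z,y'))) := by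
    intro a b
    rw [← SimpleGraph.mem_edgeSet, hE]
    simp only [Set.mem_union, Set.mem_diff, SimpleGraph.mem_edgeSet, Set.mem_insert_iff,
      Set.mem_singleton_iff]
  -- degrees are preserved
  have hdeg : ∀ v, deg T' v = deg T v := by
    intro v
    rw [deg_eq_card_filter, deg_eq_card_filter]
    by_cases hvx : x = v
    · subst hvx
      have hset : Finset.univ.filter (T'.Adj x) =
          insert y ((Finset.univ.filter (T.Adj x)).erase z) := by
        ext u
        simp only [Finset.mem_filter, Finset.mem_univ, true_and, Finset.mem_insert,
          Finset.mem_erase, hA, Sym2.eq_iff, hxy, hzxne, hzyne, hx'y', hx'x, hx'z, hx'y,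
          hy'x, hy'z, hy'y, Ne.symm hxy, Ne.symm hzxne, Ne.symm hzyne, Ne.symm hx'y',
          Ne.symm hx'x, Ne.symm hx'z, Ne.symm hx'y, Ne.symm hy'x, Ne.symm hy'z, Ne.symm hy'y,
          false_and, and_false, false_or, or_false, true_and, and_true, not_false_iff]
        tauto
      rw [hset, Finset.card_insert_of_notMem, Finset.card_erase_of_mem]
      · have hpos : 0 < (Finset.univ.filter (T.Adj x)).card :=
          Finset.card_pos.mpr ⟨z, by simp [hzx.symm]⟩
        omega
      · simp [hzx.symm]
      · simp only [Finset.mem_erase, Finset.mem_filter, Finset.mem_univ, true_and]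
        rintro ⟨-, h⟩
        exact hnxy h
    · by_cases hvy : y = v
      · subst hvy
        have hset : Finset.univ.filter (T'.Adj y) =
            insert x ((Finset.univ.filter (T.Adj y)).erase z) := by
          ext u
          simp only [Finset.mem_filter, Finset.mem_univ, true_and, Finset.mem_insert,
            Finset.mem_erase, hA, Sym2.eq_iff, hxy, hzxne, hzyne, hx'y', hx'x, hx'z, hx'y, hy'x, hy'z, hy'y, Ne.symm hxy, Ne.symm hzxne, Ne.symm hzyne, Ne.symm hx'y', Ne.symm hx'x, Ne.symm hx'z, Ne.symm hx'y, Ne.symm hy'x, Ne.symm hy'z, Ne.symm hy'y,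
            false_and, and_false, false_or, or_false, true_and, and_true, not_false_iff]
          tauto
        rw [hset, Finset.card_insert_of_notMem, Finset.card_erase_of_mem]
        · have hpos : 0 < (Finset.univ.filter (T.Adj y)).card :=
            Finset.card_pos.mpr ⟨z, by simp [hzy.symm]⟩
          omega
        · simp [hzy.symm]
        · simp only [Finset.mem_erase, Finset.mem_filter, Finset.mem_univ, true_and]
          rintro ⟨-, h⟩
          exact hnxy h.symm
      · by_cases hvz : z = v
        · subst hvz
          have hset : Finset.univ.filter (T'.Adj z) = ({x', y'} : Finset V) := by
            ext u
            have hu : T.Adj z u → (u = x ∨ u = y) := by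
              intro h
              have : u ∈ ({x, y} : Finset V) := by rw [hNz]; simp [h]
              simpa using this
            simp only [Finset.mem_filter, Finset.mem_univ, true_and, Finset.mem_insert,
              Finset.mem_singleton, hA, Sym2.eq_iff, hxy, hzxne, hzyne, hx'y', hx'x, hx'z, hx'y, hy'x, hy'z, hy'y, Ne.symm hxy, Ne.symm hzxne, Ne.symm hzyne, Ne.symm hx'y', Ne.symm hx'x, Ne.symm hx'z, Ne.symm hx'y, Ne.symm hy'x, Ne.symm hy'z, Ne.symm hy'y,
              false_and, and_false, false_or, or_false, true_and, and_true, not_false_iff]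
            constructor
            · rintro (⟨h, hn⟩ | h)
              · rcases hu h with rfl | rfl <;> tauto
              · tauto
            · rintro (rfl | rfl) <;> tauto
          rw [hset, ← deg_eq_card_filter, hdz]
          simp [hx'y']
        · by_cases hvx' : x' = v
          · subst hvx'
            have hset : Finset.univ.filter (T'.Adj x') =
                insert z ((Finset.univ.filter (T.Adj x')).erase y') := by
              ext u
              simp only [Finset.mem_filter, Finset.mem_univ, true_and, Finset.mem_insert,
                Finset.mem_erase, hA, Sym2.eq_iff, hxy, hzxne, hzyne, hx'y', hx'x, hx'z, hx'y, hy'x, hy'z, hy'y, Ne.symm hxy, Ne.symm hzxne, Ne.symm hzyne, Ne.symm hx'y', Ne.symm hx'x, Ne.symm hx'z, Ne.symm hx'y, Ne.symm hy'x, Ne.symm hy'z, Ne.symm hy'y,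
                false_and, and_false, false_or, or_false, true_and, and_true, not_false_iff]
              tauto
            rw [hset, Finset.card_insert_of_notMem, Finset.card_erase_of_mem]
            · have hpos : 0 < (Finset.univ.filter (T.Adj x')).card :=
                Finset.card_pos.mpr ⟨y', by simp [hadj']⟩
              omega
            · simp [hadj']
            · simp only [Finset.mem_erase, Finset.mem_filter, Finset.mem_univ, true_and]
              rintro ⟨-, h⟩
              exact hnzx' h.symm
          · by_cases hvy' : y' = v
            · subst hvy'
              have hset : Finset.univ.filter (T'.Adj y') =
                  insert z ((Finset.univ.filter (T.Adj y')).erase x') := by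
                ext u
                simp only [Finset.mem_filter, Finset.mem_univ, true_and, Finset.mem_insert,
                  Finset.mem_erase, hA, Sym2.eq_iff, hxy, hzxne, hzyne, hx'y', hx'x, hx'z, hx'y, hy'x, hy'z, hy'y, Ne.symm hxy, Ne.symm hzxne, Ne.symm hzyne, Ne.symm hx'y', Ne.symm hx'x, Ne.symm hx'z, Ne.symm hx'y, Ne.symm hy'x, Ne.symm hy'z, Ne.symm hy'y,
                  false_and, and_false, false_or, or_false, true_and, and_true, not_false_iff]
                tauto
              rw [hset, Finset.card_insert_of_notMem, Finset.card_erase_of_mem]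
              · have hpos : 0 < (Finset.univ.filter (T.Adj y')).card :=
                  Finset.card_pos.mpr ⟨x', by simp [hadj'.symm]⟩
                omega
              · simp [hadj'.symm]
              · simp only [Finset.mem_erase, Finset.mem_filter, Finset.mem_univ, true_and]
                rintro ⟨-, h⟩
                exact hnzy' h.symm
            · congr 1
              ext u
              simp only [Finset.mem_filter, Finset.mem_univ, true_and, hA, Sym2.eq_iff]
              constructor
              · rintro (⟨h, -⟩ | h)
                · exact h
                · rcases h with (⟨h1, -⟩ | ⟨h1, -⟩) | (⟨h1, -⟩ | ⟨h1, -⟩) | (⟨h1, -⟩ | ⟨h1, -⟩) <;>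
                    first
                    | exact absurd h1.symm hvx
                    | exact absurd h1.symm hvy
                    | exact absurd h1.symm hvz
                    | exact absurd h1.symm hvx'
                    | exact absurd h1.symm hvy'
              · intro h
                left
                refine ⟨h, ?_⟩
                rintro ((⟨h1, -⟩ | ⟨h1, -⟩) | (⟨h1, -⟩ | ⟨h1, -⟩) | (⟨h1, -⟩ | ⟨h1, -⟩)) <;>
                  first
                  | exact hvx h1.symm
                  | exact hvy h1.symm
                  | exact hvz h1.symm
                  | exact hvx' h1.symm
                  | exact hvy' h1.symm
  -- edge finsets
  have hEf : T'.edgeFinset =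
      (T.edgeFinset \ {s(x,z), s(z,y), s(x',y')}) ∪ {s(x,y), s(x',z), s(z,y')} := by
    ext e
    rw [SimpleGraph.mem_edgeFinset, hE]
    simp only [Set.mem_union, Set.mem_diff, Finset.mem_union, Finset.mem_sdiff,
      SimpleGraph.mem_edgeFinset, Set.mem_insert_iff, Set.mem_singleton_iff,
      Finset.mem_insert, Finset.mem_singleton]
  set F : Sym2 V → ℤ :=
    Sym2.lift ⟨fun u v => ((deg T u : ℤ) - 1) * ((deg T v : ℤ) - 1),
      fun u v => by ring⟩ with hF
  have hW : Wp T = ∑ e ∈ T.edgeFinset, F e := by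
    unfold Wp
    rfl
  have hW' : Wp T' = ∑ e ∈ T'.edgeFinset, F e := by
    unfold Wp
    refine Finset.sum_congr (by congr!) fun e _ => ?_
    induction e using Sym2.ind with
    | _ u v => simp [hF, hdeg]
  have hf1 : s(x,y) ∉ T.edgeFinset := by
    simp [SimpleGraph.mem_edgeFinset, hnxy]
  have hf2 : s(x',z) ∉ T.edgeFinset := by
    simp only [SimpleGraph.mem_edgeFinset, SimpleGraph.mem_edgeSet]
    exact fun h => hnzx' h.symm
  have hf3 : s(z,y') ∉ T.edgeFinset := by
    simp [SimpleGraph.mem_edgeFinset, hnzy']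
  have hsub : ({s(x,z), s(z,y), s(x',y')} : Finset (Sym2 V)) ⊆ T.edgeFinset := by
    intro e he
    simp only [Finset.mem_insert, Finset.mem_singleton] at he
    rcases he with rfl | rfl | rfl <;>
      simp [SimpleGraph.mem_edgeFinset, hzx.symm, hzy, hadj']
  have hdisj2 : Disjoint (T.edgeFinset \ {s(x,z), s(z,y), s(x',y')})
      ({s(x,y), s(x',z), s(z,y')} : Finset (Sym2 V)) := by
    rw [Finset.disjoint_right]
    intro e he
    simp only [Finset.mem_insert, Finset.mem_singleton] at he
    rcases he with rfl | rfl | rfl <;>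
      simp only [Finset.mem_sdiff, not_and] <;>
      intro h <;>
      [exact absurd h hf1; exact absurd h hf2; exact absurd h hf3]
  have hmain : Wp T - Wp T' =
      ((deg T x' : ℤ) * (deg T y' : ℤ) - 2 * ((deg T x' : ℤ) + (deg T y' : ℤ))) -
      ((deg T x : ℤ) * (deg T y : ℤ) - 2 * ((deg T x : ℤ) + (deg T y : ℤ))) := by
    rw [hW, hW', hEf, Finset.sum_union hdisj2, Finset.sum_sdiff_eq_sub hsub]
    rw [show ({s(x,z), s(z,y), s(x',y')} : Finset (Sym2 V)) =
        insert s(x,z) (insert s(z,y) {s(x',y')}) from rfl]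
    rw [show ({s(x,y), s(x',z), s(z,y')} : Finset (Sym2 V)) =
        insert s(x,y) (insert s(x',z) {s(z,y')}) from rfl]
    rw [Finset.sum_insert (by simp [Sym2.eq_iff, hxy, hzxne, hzyne, hx'y', hx'x, hx'z, hx'y, hy'x, hy'z, hy'y, Ne.symm hxy, Ne.symm hzxne, Ne.symm hzyne, Ne.symm hx'y', Ne.symm hx'x, Ne.symm hx'z, Ne.symm hx'y, Ne.symm hy'x, Ne.symm hy'z, Ne.symm hy'y]),
      Finset.sum_insert (by simp [Sym2.eq_iff, hxy, hzxne, hzyne, hx'y', hx'x, hx'z, hx'y, hy'x, hy'z, hy'y, Ne.symm hxy, Ne.symm hzxne, Ne.symm hzyne, Ne.symm hx'y', Ne.symm hx'x, Ne.symm hx'z, Ne.symm hx'y, Ne.symm hy'x, Ne.symm hy'z, Ne.symm hy'y]),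
      Finset.sum_singleton,
      Finset.sum_insert (by simp [Sym2.eq_iff, hxy, hzxne, hzyne, hx'y', hx'x, hx'z, hx'y, hy'x, hy'z, hy'y, Ne.symm hxy, Ne.symm hzxne, Ne.symm hzyne, Ne.symm hx'y', Ne.symm hx'x, Ne.symm hx'z, Ne.symm hx'y, Ne.symm hy'x, Ne.symm hy'z, Ne.symm hy'y]),
      Finset.sum_insert (by simp [Sym2.eq_iff, hxy, hzxne, hzyne, hx'y', hx'x, hx'z, hx'y, hy'x, hy'z, hy'y, Ne.symm hxy, Ne.symm hzxne, Ne.symm hzyne, Ne.symm hx'y', Ne.symm hx'x, Ne.symm hx'z, Ne.symm hx'y, Ne.symm hy'x, Ne.symm hy'z, Ne.symm hy'y]),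
      Finset.sum_singleton]
    simp only [hF, Sym2.lift_mk, hdz]
    push_cast
    ring
  refine ⟨hmain, ?_⟩
  have key : ∀ a b c d : ℕ, 2 ≤ a → 2 ≤ b → a ≤ 4 → b ≤ 4 → 3 ≤ c → 3 ≤ d →
      c ≤ 4 → d ≤ 4 → 4 < a + b → a + b < 8 → a + b < c + d →
      (0:ℤ) < ((c:ℤ) * d - 2 * ((c:ℤ) + d)) - ((a:ℤ) * b - 2 * ((a:ℤ) + b)) := by
    intro a b c d ha hb ha4 hb4 hc hd hc4 hd4 h1 h2 h3
    interval_cases a <;> interval_cases b <;> interval_cases c <;> interval_cases d <;> omega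
  exact key (deg T x) (deg T y) (deg T x') (deg T y') hdx hdy (hmax x) (hmax y)
    hdx' hdy' (hmax x') (hmax y') hsum1 hsum2 hbig
end

section
/- Let T be a tree in which three distinct vertices u, v, w all have degree 3, and let w₁, w₂ be the two neighbors of w lying on neither the u–w path nor the v–w path. Suppose every vertex on the u–w path and v–w path other than u, v, w has degree 4. Let T′ = T − {ww₁, ww₂} + {uw₁, vw₂}. Then W_p(T) ≤ W_p(T′). -/
open SimpleGraph Finset

namespace SimpleGraph

lemma IsAcyclic.not_adj_of_isPath {V : Type*} {G : SimpleGraph V} (hG : G.IsAcyclic)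
    {u w x : V} {p : G.Walk u w} (hp : p.IsPath) (huw : u ≠ w) (hwx : G.Adj w x)
    (hx : x ∉ p.support) : ¬G.Adj u x := fun hux =>
  hx <| hG.mem_support_of_ne_mem_support_of_adj_of_isPath hp (Path.singleton hux).2 hwx
    (by simp [huw.symm, hwx.ne])

end SimpleGraph

structure IsEdgeSwap {V : Type*} (G G' : SimpleGraph V) (e₁ e₂ f₁ f₂ : Sym2 V) : Prop where
  edgeSet_eq : G'.edgeSet = (G.edgeSet \ {e₁, e₂}) ∪ {f₁, f₂}
  mem₁ : e₁ ∈ G.edgeSet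
  mem₂ : e₂ ∈ G.edgeSet
  ne : e₁ ≠ e₂
  notMem₁ : f₁ ∉ G.edgeSet
  notMem₂ : f₂ ∉ G.edgeSet
  ne' : f₁ ≠ f₂

section

variable {V : Type*} [Fintype V]

lemma deg_eq_degree (G : SimpleGraph V) [DecidableRel G.Adj] (x : V) :
    deg G x = G.degree x := by
  unfold deg; congr!

lemma one_le_deg_of_adj {G : SimpleGraph V} {x y : V} (h : G.Adj x y) : 1 ≤ deg G x := by
  classical
  rw [deg_eq_degree]
  exact (G.degree_pos_iff_exists_adj x).2 ⟨y, h⟩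

noncomputable def wpWeight (G : SimpleGraph V) : Sym2 V → ℤ :=
  Sym2.lift ⟨fun a b => ((deg G a : ℤ) - 1) * ((deg G b : ℤ) - 1), fun _ _ => mul_comm _ _⟩

@[simp]
lemma wpWeight_mk (G : SimpleGraph V) (a b : V) :
    wpWeight G s(a, b) = ((deg G a : ℤ) - 1) * ((deg G b : ℤ) - 1) := rfl

lemma Wp_eq_sum_wpWeight (G : SimpleGraph V) [DecidableEq V] [DecidableRel G.Adj] :
    Wp G = ∑ e ∈ G.edgeFinset, wpWeight G e := by
  unfold Wp wpWeight; congr!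

lemma wpWeight_le_wpWeight {G G' : SimpleGraph V} {e : Sym2 V} (he : e ∈ G.edgeSet)
    (h : ∀ x ∈ e, deg G x ≤ deg G' x) : wpWeight G e ≤ wpWeight G' e := by
  induction e using Sym2.ind with
  | _ a b =>
    have ha := one_le_deg_of_adj (G.mem_edgeSet.1 he)
    have hb := one_le_deg_of_adj (G.mem_edgeSet.1 he).symm
    have ha' := h a (Sym2.mem_mk_left a b)
    have hb' := h b (Sym2.mem_mk_right a b)
    simp only [wpWeight_mk]
    exact mul_le_mul (by omega) (by omega) (by omega) (by omega)

lemma sum_wpWeight_sub_le_of_subset [DecidableEq V] {G G' : SimpleGraph V} [DecidableRel G.Adj]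
    {S : Finset (Sym2 V)} {w : V} (hS : S ⊆ G.edgeFinset)
    (hSw : ∀ e ∈ G.edgeFinset, w ∈ e → e ∈ S) (hmono : ∀ x, x ≠ w → deg G x ≤ deg G' x) :
    ∑ e ∈ S, (wpWeight G' e - wpWeight G e) ≤
      ∑ e ∈ G.edgeFinset, (wpWeight G' e - wpWeight G e) :=
  sum_le_sum_of_subset_of_nonneg hS fun e he heS =>
    sub_nonneg.2 <| wpWeight_le_wpWeight (mem_edgeFinset.1 he) fun x hx =>
      hmono x fun hxw => heS (hSw e he (hxw ▸ hx))

lemma neighborFinset_eq_of_deg_eq_three [DecidableEq V] {G : SimpleGraph V} [DecidableRel G.Adj]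
    {w a b c : V} (hw : deg G w = 3) (ha : G.Adj w a) (hb : G.Adj w b) (hc : G.Adj w c)
    (hab : a ≠ b) (hac : a ≠ c) (hbc : b ≠ c) : G.neighborFinset w = {a, b, c} :=
  (eq_of_subset_of_card_le (by simp [insert_subset_iff, ha, hb, hc])
    (by simp [← deg_eq_degree, hw, hab, hac, hbc])).symm

lemma eq_or_eq_or_eq_of_neighborFinset_eq [DecidableEq V] {G : SimpleGraph V}
    [DecidableRel G.Adj] {w a b c : V} (hNw : G.neighborFinset w = {a, b, c}) {e : Sym2 V}
    (he : e ∈ G.edgeSet) (hwe : w ∈ e) : e = s(w, a) ∨ e = s(w, b) ∨ e = s(w, c) := by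
  obtain ⟨x, rfl⟩ := Sym2.mem_iff_exists.1 hwe
  have hx : x ∈ G.neighborFinset w := by simpa using he
  simp only [hNw, mem_insert, mem_singleton] at hx
  rcases hx with rfl | rfl | rfl <;> simp

lemma exists_neighborFinset_eq_of_walks [DecidableEq V] {G : SimpleGraph V} [DecidableRel G.Adj]
    {u v w w₁ w₂ : V} {k : ℕ} (hw : deg G w = 3) (hww₁ : G.Adj w w₁) (hww₂ : G.Adj w w₂)
    (hw₁w₂ : w₁ ≠ w₂) (huv : u ≠ v)
    (p : G.Walk u w) (huw : u ≠ w) (hw₁p : w₁ ∉ p.support) (hw₂p : w₂ ∉ p.support)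
    (hpdeg : ∀ x ∈ p.support, x ≠ u → x ≠ w → deg G x = k)
    (q : G.Walk v w) (hvw : v ≠ w) (hw₁q : w₁ ∉ q.support) (hw₂q : w₂ ∉ q.support)
    (hqdeg : ∀ x ∈ q.support, x ≠ v → x ≠ w → deg G x = k) :
    ∃ z, z ≠ w₁ ∧ z ≠ w₂ ∧ G.neighborFinset w = {w₁, w₂, z} ∧ deg G z = k := by
  have hz := (p.adj_penultimate (Walk.not_nil_of_ne huw)).symm
  have hzp := p.getVert_mem_support (p.length - 1)
  have hNw := neighborFinset_eq_of_deg_eq_three hw hww₁ hww₂ hz hw₁w₂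
    (hzp.ne_of_notMem hw₁p).symm (hzp.ne_of_notMem hw₂p).symm
  have hzq := q.getVert_mem_support (q.length - 1)
  have hqz : q.penultimate ∈ G.neighborFinset w :=
    (G.mem_neighborFinset _ _).2 (q.adj_penultimate (Walk.not_nil_of_ne hvw)).symm
  simp only [hNw, mem_insert, mem_singleton, hzq.ne_of_notMem hw₁q, hzq.ne_of_notMem hw₂q,
    false_or] at hqz
  refine ⟨p.penultimate, hzp.ne_of_notMem hw₁p, hzp.ne_of_notMem hw₂p, hNw, ?_⟩
  -- the common neighbour of `w` on both walks is interior to at least one of them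
  rcases eq_or_ne p.penultimate u with hzu | hzu
  · exact hqdeg _ (hqz ▸ hzq) (hzu.symm ▸ huv) hz.ne'
  · exact hpdeg _ hzp hzu hz.ne'

lemma exists_adj_deg_eq_of_walk {G : SimpleGraph V} {u w : V} (p : G.Walk u w) {k : ℕ}
    (hpdeg : ∀ x ∈ p.support, x ≠ u → x ≠ w → deg G x = k) (huw : u ≠ w) (hadj : ¬G.Adj u w) :
    ∃ x, G.Adj u x ∧ deg G x = k := by
  have hsnd := p.adj_snd (Walk.not_nil_of_ne huw)
  exact ⟨p.snd, hsnd, hpdeg _ (p.getVert_mem_support 1) hsnd.ne' fun h => hadj (h ▸ hsnd)⟩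

namespace IsEdgeSwap

variable {G G' : SimpleGraph V} {e₁ e₂ f₁ f₂ : Sym2 V}

lemma sum_add [DecidableEq V] [DecidableRel G.Adj] [DecidableRel G'.Adj]
    (h : IsEdgeSwap G G' e₁ e₂ f₁ f₂) {M : Type*} [AddCommMonoid M] (F : Sym2 V → M) :
    ∑ e ∈ G'.edgeFinset, F e + (F e₁ + F e₂) = ∑ e ∈ G.edgeFinset, F e + (F f₁ + F f₂) := by
  have hE : G'.edgeFinset = (G.edgeFinset \ {e₁, e₂}) ∪ {f₁, f₂} := by
    apply coe_injective
    push_cast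
    exact h.edgeSet_eq
  have hdisj : Disjoint (G.edgeFinset \ {e₁, e₂}) {f₁, f₂} :=
    disjoint_of_subset_left sdiff_subset (by simp [h.notMem₁, h.notMem₂])
  rw [hE, sum_union hdisj, sum_pair h.ne', ← sum_pair h.ne, add_right_comm,
    sum_sdiff (by simp [insert_subset_iff, h.mem₁, h.mem₂])]

lemma deg_add [DecidableEq V] (h : IsEdgeSwap G G' e₁ e₂ f₁ f₂) (x : V) :
    deg G' x + ((if x ∈ e₁ then 1 else 0) + if x ∈ e₂ then 1 else 0) =
      deg G x + ((if x ∈ f₁ then 1 else 0) + if x ∈ f₂ then 1 else 0) := by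
  classical
  simpa only [deg_eq_degree, ← card_incidenceFinset_eq_degree, incidenceFinset_eq_filter,
    card_filter] using h.sum_add fun e => if x ∈ e then 1 else 0

lemma deg_le_deg [DecidableEq V] (h : IsEdgeSwap G G' e₁ e₂ f₁ f₂) {x : V}
    (h₁ : x ∈ e₁ → x ∈ f₁) (h₂ : x ∈ e₂ → x ∈ f₂) : deg G x ≤ deg G' x := by
  have := h.deg_add x
  split_ifs at this <;> simp_all

lemma le_Wp_sub_Wp [DecidableEq V] [DecidableRel G.Adj] [DecidableRel G'.Adj] {w w₁ w₂ : V}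
    {S : Finset (Sym2 V)} (h : IsEdgeSwap G G' s(w, w₁) s(w, w₂) f₁ f₂) (hw : deg G' w = 1)
    (hS : S ⊆ G.edgeFinset) (hSw : ∀ e ∈ G.edgeFinset, w ∈ e → e ∈ S)
    (hmono : ∀ x, x ≠ w → deg G x ≤ deg G' x) :
    ∑ e ∈ S, (wpWeight G' e - wpWeight G e) + (wpWeight G' f₁ + wpWeight G' f₂) ≤
      Wp G' - Wp G := by
  have hswap := h.sum_add (wpWeight G')
  have hsub := sum_wpWeight_sub_le_of_subset hS hSw hmono
  -- both removed edges contain `w`, so they weigh nothing in `G'`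
  simp only [wpWeight_mk, hw, Nat.cast_one, sub_self, zero_mul, add_zero] at hswap
  rw [sum_sub_distrib (s := G.edgeFinset)] at hsub
  rw [Wp_eq_sum_wpWeight, Wp_eq_sum_wpWeight, hswap]
  linarith

end IsEdgeSwap

lemma exists_deg_four_neighbors [DecidableEq V] {G : SimpleGraph V} [DecidableRel G.Adj]
    {u v w w₁ w₂ : V} (huv : u ≠ v) (huw : u ≠ w) (hvw : v ≠ w)
    (hdu : deg G u = 3) (hdv : deg G v = 3) (hdw : deg G w = 3)
    (p : G.Walk u w) (q : G.Walk v w)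
    (hww₁ : G.Adj w w₁) (hww₂ : G.Adj w w₂) (hw₁w₂ : w₁ ≠ w₂)
    (hw₁p : w₁ ∉ p.support) (hw₁q : w₁ ∉ q.support)
    (hw₂p : w₂ ∉ p.support) (hw₂q : w₂ ∉ q.support)
    (hpdeg : ∀ x ∈ p.support, x ≠ u → x ≠ w → deg G x = 4)
    (hqdeg : ∀ x ∈ q.support, x ≠ v → x ≠ w → deg G x = 4) :
    ∃ z u' v', z ≠ w₁ ∧ z ≠ w₂ ∧ G.neighborFinset w = {w₁, w₂, z} ∧ deg G z = 4 ∧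
      G.Adj u u' ∧ deg G u' = 4 ∧ G.Adj v v' ∧ deg G v' = 4 := by
  obtain ⟨z, hzw₁, hzw₂, hNw, hdz⟩ := exists_neighborFinset_eq_of_walks hdw hww₁ hww₂ hw₁w₂ huv
    p huw hw₁p hw₂p hpdeg q hvw hw₁q hw₂q hqdeg
  have hu : ¬G.Adj u w := fun h => by
    have hmem : u ∈ G.neighborFinset w := (G.mem_neighborFinset w u).2 h.symm
    simp [hNw, p.start_mem_support.ne_of_notMem hw₁p, p.start_mem_support.ne_of_notMem hw₂p,
      show u ≠ z by rintro rfl; omega] at hmem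
  have hv : ¬G.Adj v w := fun h => by
    have hmem : v ∈ G.neighborFinset w := (G.mem_neighborFinset w v).2 h.symm
    simp [hNw, q.start_mem_support.ne_of_notMem hw₁q, q.start_mem_support.ne_of_notMem hw₂q,
      show v ≠ z by rintro rfl; omega] at hmem
  obtain ⟨u', huu', hdu'⟩ := exists_adj_deg_eq_of_walk p hpdeg huw hu
  obtain ⟨v', hvv', hdv'⟩ := exists_adj_deg_eq_of_walk q hqdeg hvw hv
  exact ⟨z, u', v', hzw₁, hzw₂, hNw, hdz, huu', hdu', hvv', hdv'⟩

lemma Wp_le_Wp_of_isEdgeSwap [DecidableEq V] {G G' : SimpleGraph V} [DecidableRel G.Adj]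
    {u v w w₁ w₂ z u' v' : V} (h : IsEdgeSwap G G' s(w, w₁) s(w, w₂) s(u, w₁) s(v, w₂))
    (huv : u ≠ v) (hzw₁ : z ≠ w₁) (hzw₂ : z ≠ w₂) (hNw : G.neighborFinset w = {w₁, w₂, z})
    (huu' : G.Adj u u') (hvv' : G.Adj v v')
    (hdw : deg G w = 3) (hdz : deg G z = 4) (hdu : deg G u = 3) (hdv : deg G v = 3)
    (hdu' : deg G u' = 4) (hdv' : deg G v' = 4)
    (hd'w : deg G' w = 1) (hd'u : deg G' u = 4) (hd'v : deg G' v = 4) :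
    Wp G ≤ Wp G' := by
  classical
  have hww₁ : G.Adj w w₁ := h.mem₁
  have hww₂ : G.Adj w w₂ := h.mem₂
  have hwz : G.Adj w z := (G.mem_neighborFinset w z).1 (by simp [hNw])
  have hw₁w₂ : w₁ ≠ w₂ := fun h' => h.ne (by rw [h'])
  have huw : u ≠ w := by rintro rfl; omega
  have hvw : v ≠ w := by rintro rfl; omega
  have hu'w : u' ≠ w := by rintro rfl; omega
  have hv'w : v' ≠ w := by rintro rfl; omega
  have huv' : u ≠ v' := by rintro rfl; omega
  have hmono : ∀ x, x ≠ w → deg G x ≤ deg G' x := fun x hxw =>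
    h.deg_le_deg (by simp +contextual [hxw]) (by simp +contextual [hxw])
  set S : Finset (Sym2 V) := {s(w, w₁), s(w, w₂), s(w, z), s(u, u'), s(v, v')}
  have hS : S ⊆ G.edgeFinset := by
    simp [S, insert_subset_iff, hww₁, hww₂, hwz, huu', hvv']
  have hSw : ∀ e ∈ G.edgeFinset, w ∈ e → e ∈ S := fun e he hwe => by
    rcases eq_or_eq_or_eq_of_neighborFinset_eq hNw (mem_edgeFinset.1 he) hwe with
      rfl | rfl | rfl <;> simp [S]
  have key := h.le_Wp_sub_Wp hd'w hS hSw hmono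
  rw [sum_insert, sum_insert, sum_insert, sum_insert, sum_singleton] at key
  · simp only [wpWeight_mk, hd'w, hd'u, hd'v, hdw, hdz, hdu, hdv, hdu', hdv'] at key
    push_cast at key
    nlinarith [hmono w₁ hww₁.ne', hmono w₂ hww₂.ne', hmono u' hu'w, hmono v' hv'w,
      one_le_deg_of_adj hww₁.symm, one_le_deg_of_adj hww₂.symm]
  all_goals simp [huv, huv', hw₁w₂, hzw₁.symm, hzw₂.symm, hww₂.ne, hwz.ne, huw.symm,
    hu'w.symm, hvw.symm, hv'w.symm]

end

theorem wp_three_deg3_swap_general {V : Type*} [Fintype V] (T T' : SimpleGraph V)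
    (hT : T.IsTree)
    (u v w w₁ w₂ : V)
    (huv : u ≠ v) (huw : u ≠ w) (hvw : v ≠ w)
    (hdu : deg T u = 3) (hdv : deg T v = 3) (hdw : deg T w = 3)
    (p : T.Walk u w) (hp : p.IsPath)
    (q : T.Walk v w) (hq : q.IsPath)
    (hww₁ : T.Adj w w₁) (hww₂ : T.Adj w w₂) (hw₁w₂ : w₁ ≠ w₂)
    (hw₁p : w₁ ∉ p.support) (hw₁q : w₁ ∉ q.support)
    (hw₂p : w₂ ∉ p.support) (hw₂q : w₂ ∉ q.support)
    (hpdeg : ∀ x ∈ p.support, x ≠ u → x ≠ w → deg T x = 4)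
    (hqdeg : ∀ x ∈ q.support, x ≠ v → x ≠ w → deg T x = 4)
    (hE : T'.edgeSet = (T.edgeSet \ {s(w, w₁), s(w, w₂)}) ∪ {s(u, w₁), s(v, w₂)}) :
    Wp T ≤ Wp T' := by
  classical
  have huw₁ := p.start_mem_support.ne_of_notMem hw₁p
  have huw₂ := p.start_mem_support.ne_of_notMem hw₂p
  have hvw₁ := q.start_mem_support.ne_of_notMem hw₁q
  have hvw₂ := q.start_mem_support.ne_of_notMem hw₂q
  have hswap : IsEdgeSwap T T' s(w, w₁) s(w, w₂) s(u, w₁) s(v, w₂) :=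
    ⟨hE, hww₁, hww₂, by simp [hw₁w₂, hww₂.ne], hT.isAcyclic.not_adj_of_isPath hp huw hww₁ hw₁p,
      hT.isAcyclic.not_adj_of_isPath hq hvw hww₂ hw₂q, by simp [huv, huw₂]⟩
  have hd'w : deg T' w = 1 := by
    have := hswap.deg_add w; simp [huw.symm, hvw.symm, hww₁.ne, hww₂.ne] at this; omega
  have hd'u : deg T' u = 4 := by
    have := hswap.deg_add u; simp [huw, huw₁, huw₂, huv] at this; omega
  have hd'v : deg T' v = 4 := by
    have := hswap.deg_add v; simp [hvw, hvw₁, hvw₂, huv.symm] at this; omega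
  obtain ⟨z, u', v', hzw₁, hzw₂, hNw, hdz, huu', hdu', hvv', hdv'⟩ :=
    exists_deg_four_neighbors huv huw hvw hdu hdv hdw p q hww₁ hww₂ hw₁w₂
      hw₁p hw₁q hw₂p hw₂q hpdeg hqdeg
  exact Wp_le_Wp_of_isEdgeSwap hswap huv hzw₁ hzw₂ hNw huu' hvv' hdw hdz hdu hdv hdu' hdv'
    hd'w hd'u hd'v

theorem wp_three_deg3_swap {V : Type*} [Fintype V] (T T' : SimpleGraph V)
    (hT : T.IsTree) (hT' : T'.IsTree)
    (u v w w₁ w₂ : V)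
    (huv : u ≠ v) (huw : u ≠ w) (hvw : v ≠ w)
    (hdu : deg T u = 3) (hdv : deg T v = 3) (hdw : deg T w = 3)
    (p : T.Walk u w) (hp : p.IsPath)
    (q : T.Walk v w) (hq : q.IsPath)
    (hww₁ : T.Adj w w₁) (hww₂ : T.Adj w w₂) (hw₁w₂ : w₁ ≠ w₂)
    (hw₁p : w₁ ∉ p.support) (hw₁q : w₁ ∉ q.support)
    (hw₂p : w₂ ∉ p.support) (hw₂q : w₂ ∉ q.support)
    (hpdeg : ∀ x ∈ p.support, x ≠ u → x ≠ w → deg T x = 4)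
    (hqdeg : ∀ x ∈ q.support, x ≠ v → x ≠ w → deg T x = 4)
    (hE : T'.edgeSet = (T.edgeSet \ {s(w, w₁), s(w, w₂)}) ∪ {s(u, w₁), s(v, w₂)}) :
    Wp T ≤ Wp T' :=
  wp_three_deg3_swap_general T T' hT u v w w₁ w₂ huv huw hvw hdu hdv hdw p hp q hq hww₁ hww₂ hw₁w₂
    hw₁p hw₁q hw₂p hw₂q hpdeg hqdeg hE
end
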